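/- arXiv:2410.10187 — 8 statements merged into one kernel-verified Lean document; each statement's English description precedes it below -/
import Mathlib

section
/- For any ζ > 0 and any real γ > 1, the function φ(x) = ln(1 + x^γ) satisfies φ'(ζ) = γ / (ζ + ζ^{1-γ}) ≤ (γ - 1)^{(γ-1)/γ}. -/
open Real

lemma hasDerivAt_log_one_add_rpow (γ : ℝ) {x : ℝ} (hx : 0 < x) :
    HasDerivAt (fun x : ℝ => log (1 + x ^ γ)) (γ / (x + x ^ (1 - γ))) x := by
  have hderiv := ((hasDerivAt_rpow_const (p := γ) (Or.inl hx.ne')).const_add 1).log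
    (by positivity)
  convert hderiv using 1
  have hsplit : x ^ (γ - 1) * x ^ (1 - γ) = 1 := by
    rw [← rpow_add hx, sub_add_sub_cancel, sub_self, rpow_zero]
  have hγ : x ^ (γ - 1) * x = x ^ γ := by rw [← rpow_add_one hx.ne', sub_add_cancel]
  rw [div_eq_div_iff (by positivity) (by positivity)]
  linear_combination -γ * hγ - γ * hsplit

/-- Weighted AM-GM with weights `(γ-1)/γ` and `1/γ`, applied to `γ x/(γ-1)` and `γ x^(1-γ)`:
the powers of `x` cancel in the geometric mean. -/
lemma div_rpow_le_add_rpow_one_sub {γ x : ℝ} (hγ : 1 < γ) (hx : 0 < x) :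
    γ / (γ - 1) ^ ((γ - 1) / γ) ≤ x + x ^ (1 - γ) := by
  have hγ0 : 0 < γ := by linarith
  have hγ1 : 0 < γ - 1 := by linarith
  have hweights : (γ - 1) / γ + 1 / γ = 1 := by field_simp; ring
  have amgm := geom_mean_le_arith_mean2_weighted (by positivity) (by positivity)
    (by positivity : 0 ≤ γ / (γ - 1) * x) (by positivity : 0 ≤ γ * x ^ (1 - γ)) hweights
  have hgeom : (γ / (γ - 1) * x) ^ ((γ - 1) / γ) * (γ * x ^ (1 - γ)) ^ (1 / γ)
      = γ / (γ - 1) ^ ((γ - 1) / γ) := by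
    have hx_cancel : x ^ ((γ - 1) / γ) * (x ^ (1 - γ)) ^ (1 / γ) = 1 := by
      rw [← rpow_mul hx.le, ← rpow_add hx, show (γ - 1) / γ + (1 - γ) * (1 / γ) = 0 by ring,
        rpow_zero]
    have hγ_sum : γ ^ ((γ - 1) / γ) * γ ^ (1 / γ) = γ := by
      rw [← rpow_add hγ0, hweights, rpow_one]
    rw [mul_rpow (by positivity) hx.le, div_rpow hγ0.le hγ1.le, mul_rpow hγ0.le (by positivity)]
    calc γ ^ ((γ - 1) / γ) / (γ - 1) ^ ((γ - 1) / γ) * x ^ ((γ - 1) / γ)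
          * (γ ^ (1 / γ) * (x ^ (1 - γ)) ^ (1 / γ))
        = γ ^ ((γ - 1) / γ) * γ ^ (1 / γ) * (x ^ ((γ - 1) / γ) * (x ^ (1 - γ)) ^ (1 / γ))
          / (γ - 1) ^ ((γ - 1) / γ) := by ring
      _ = γ / (γ - 1) ^ ((γ - 1) / γ) := by rw [hx_cancel, hγ_sum, mul_one]
  have harith : (γ - 1) / γ * (γ / (γ - 1) * x) + 1 / γ * (γ * x ^ (1 - γ))
      = x + x ^ (1 - γ) := by field_simp
  rwa [hgeom, harith] at amgm

/-- For any `ζ > 0` and real `γ > 1`, the function `φ(x) = ln(1 + x^γ)` has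
`φ'(ζ) = γ / (ζ + ζ^(1-γ))`, and this value is at most `(γ-1)^((γ-1)/γ)`. -/
theorem stmt0 (γ : ℝ) (hγ : 1 < γ) (ζ : ℝ) (hζ : 0 < ζ) :
    deriv (fun x : ℝ => Real.log (1 + x ^ γ)) ζ = γ / (ζ + ζ ^ (1 - γ)) ∧
    γ / (ζ + ζ ^ (1 - γ)) ≤ (γ - 1) ^ ((γ - 1) / γ) := by
  refine ⟨(hasDerivAt_log_one_add_rpow γ hζ).deriv, ?_⟩
  have hpow : 0 < (γ - 1) ^ ((γ - 1) / γ) := rpow_pos_of_pos (by linarith) _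
  rw [div_le_iff₀ (by positivity), ← div_le_iff₀' hpow]
  exact div_rpow_le_add_rpow_one_sub hγ hζ
end

section
/- Let h be an (α,β)-admissible noise density (satisfying the sliding property with parameter α(kε) at privacy level kε and the dilation property with parameter β((2-k)ε) at privacy level (2-k)ε), let f: D^n → ℝ^d, and let S: D^n → ℝ be a β((2-k)ε)-smooth upper bound on the local sensitivity of f. Then for any k ∈ (0,2), the algorithm A(x) = f(x) + (S(x)/α(kε)) · Z with Z ∼ h satisfies ε-differential privacy: for all neighboring x,y with d(x,y)=1 and all measurable output sets S, Pr[A(x) ∈ S] ≤ e^ε Pr[A(y) ∈ S]. -/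
open MeasureTheory

/-- Enhanced ε-differentially private algorithm using a smooth upper bound:
if the noise distribution `μ` on `ℝ^d` satisfies the sliding property with
parameter `α'` at privacy level `kε` and the dilation property with parameter `β'`
at privacy level `(2-k)ε`, and `S` is a `β'`-smooth upper bound on the local
sensitivity of `f`, then `A(x) = f(x) + (S(x)/α')·Z` is `ε`-differentially private
for any `k ∈ (0,2)`. -/
theorem stmt5 {X : Type*} [Fintype X] [DecidableEq X] {n d : ℕ}
    (f : (Fin n → X) → Fin d → ℝ) (S : (Fin n → X) → ℝ)
    (μ : Measure (Fin d → ℝ)) (ε k α' β' : ℝ)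
    (hε : 0 < ε) (hk : 0 < k) (hk2 : k < 2) (hα : 0 < α')
    (hsliding : ∀ Δ : Fin d → ℝ, (∑ i, |Δ i|) ≤ α' →
      ∀ T : Set (Fin d → ℝ), MeasurableSet T →
        μ T ≤ ENNReal.ofReal (Real.exp (k * ε / 2)) * μ ((fun z => z + Δ) '' T))
    (hdilation : ∀ lam : ℝ, |lam| ≤ β' →
      ∀ T : Set (Fin d → ℝ), MeasurableSet T →
        μ T ≤ ENNReal.ofReal (Real.exp ((2 - k) * ε / 2)) * μ ((fun z => Real.exp lam • z) '' T))
    (hSpos : ∀ x, 0 < S x)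
    -- `S` is an upper bound on the local sensitivity of `f`:
    (hub : ∀ x y, hammingDist x y = 1 → (∑ i, |f x i - f y i|) ≤ S x)
    -- `S` is `β'`-smooth:
    (hsmooth : ∀ x y, hammingDist x y = 1 → S x ≤ Real.exp β' * S y) :
    ∀ x y, hammingDist x y = 1 → ∀ T : Set (Fin d → ℝ), MeasurableSet T →
      μ ((fun z => f x + (S x / α') • z) ⁻¹' T) ≤
        ENNReal.ofReal (Real.exp ε) * μ ((fun z => f y + (S y / α') • z) ⁻¹' T) := by
  intro x y hxy T hT
  have hyx : hammingDist y x = 1 := by rwa [hammingDist_comm]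
  have hSx := hSpos x
  have hSy := hSpos y
  have hcx : (0:ℝ) < S x / α' := div_pos hSx hα
  have hcy : (0:ℝ) < S y / α' := div_pos hSy hα
  have hmeas : ∀ (a : Fin d → ℝ) (c : ℝ), Measurable (fun z : Fin d → ℝ => a + c • z) :=
    fun a c => measurable_const.add (measurable_id.const_smul c)
  set Δ : Fin d → ℝ := (S x / α')⁻¹ • (f x - f y) with hΔ
  have hΔsum : (∑ i, |Δ i|) ≤ α' := by
    have hsum : (∑ i, |Δ i|) = (S x / α')⁻¹ * ∑ i, |f x i - f y i| := by
      rw [Finset.mul_sum]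
      refine Finset.sum_congr rfl fun i _ => ?_
      simp only [hΔ, Pi.smul_apply, Pi.sub_apply, smul_eq_mul, abs_mul,
        abs_of_pos (inv_pos.mpr hcx)]
    rw [hsum]
    calc (S x / α')⁻¹ * ∑ i, |f x i - f y i|
        ≤ (S x / α')⁻¹ * S x := by
          exact mul_le_mul_of_nonneg_left (hub x y hxy) (inv_pos.mpr hcx).le
      _ = α' := by field_simp
  set lam : ℝ := Real.log (S x / S y) with hlamdef
  have helam : Real.exp lam = S x / S y := Real.exp_log (div_pos hSx hSy)
  have hlam : |lam| ≤ β' := by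
    rw [abs_le]
    constructor
    · rw [hlamdef, Real.le_log_iff_exp_le (div_pos hSx hSy), le_div_iff₀ hSy]
      have := hsmooth y x hyx
      calc Real.exp (-β') * S y ≤ Real.exp (-β') * (Real.exp β' * S x) := by
            exact mul_le_mul_of_nonneg_left this (Real.exp_nonneg _)
        _ = S x := by rw [← mul_assoc, ← Real.exp_add]; simp
    · rw [hlamdef, Real.log_le_iff_le_exp (div_pos hSx hSy), div_le_iff₀ hSy]
      exact hsmooth x y hxy
  have hkey : (S x / α') * (Real.exp lam)⁻¹ = S y / α' := by
    rw [helam]; field_simp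
  have hkey2 : (S y / α') * Real.exp lam = S x / α' := by
    rw [helam]; field_simp
  have himg1 : (fun z => z + Δ) '' ((fun z => f x + (S x / α') • z) ⁻¹' T)
      = (fun z => f y + (S x / α') • z) ⁻¹' T := by
    ext w
    simp only [Set.mem_image, Set.mem_preimage]
    constructor
    · rintro ⟨z, hz, rfl⟩
      have hEq : f x + (S x / α') • z = f y + (S x / α') • (z + Δ) := by
        rw [smul_add, hΔ, smul_inv_smul₀ hcx.ne']
        abel
      rwa [← hEq]
    · intro hw
      refine ⟨w - Δ, ?_, by abel⟩
      have hEq : f x + (S x / α') • (w - Δ) = f y + (S x / α') • w := by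
        rw [smul_sub, hΔ, smul_inv_smul₀ hcx.ne']
        abel
      rwa [hEq]
  have himg2 : (fun z => Real.exp lam • z) '' ((fun z => f y + (S x / α') • z) ⁻¹' T)
      = (fun z => f y + (S y / α') • z) ⁻¹' T := by
    ext w
    simp only [Set.mem_image, Set.mem_preimage]
    constructor
    · rintro ⟨z, hz, rfl⟩
      rwa [smul_smul, hkey2]
    · intro hw
      refine ⟨(Real.exp lam)⁻¹ • w, ?_, smul_inv_smul₀ (Real.exp_ne_zero _) w⟩
      rwa [smul_smul, hkey]
  have h1 := hsliding Δ hΔsum _ (hT.preimage (hmeas (f x) (S x / α')))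
  rw [himg1] at h1
  have h2 := hdilation lam hlam _ (hT.preimage (hmeas (f y) (S x / α')))
  rw [himg2] at h2
  calc μ ((fun z => f x + (S x / α') • z) ⁻¹' T)
      ≤ ENNReal.ofReal (Real.exp (k * ε / 2)) * μ ((fun z => f y + (S x / α') • z) ⁻¹' T) := h1
    _ ≤ ENNReal.ofReal (Real.exp (k * ε / 2)) *
        (ENNReal.ofReal (Real.exp ((2 - k) * ε / 2)) *
          μ ((fun z => f y + (S y / α') • z) ⁻¹' T)) := mul_le_mul_right h2 _
    _ = ENNReal.ofReal (Real.exp ε) * μ ((fun z => f y + (S y / α') • z) ⁻¹' T) := by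
        rw [← mul_assoc, ← ENNReal.ofReal_mul (Real.exp_nonneg _), ← Real.exp_add]
        ring_nf
end

section
/- Let f: D^n → ℝ^d have global sensitivity GS_f, local sensitivity LS_f, and for each x let gd(x) = min{d(y,x) : LS_f(y) = GS_f}. If β > 0 satisfies β ≤ min over x with LS_f(x) ≠ GS_f of (1/gd(x)) · ln(GS_f / LS_f(x)), then for every x the β-smooth sensitivity satisfies S*_{f,β}(x) = max_y ( LS_f(y) e^{-β d(y,x)} ) = GS_f · e^{-β · gd(x)}. -/
open scoped BigOperators

/-- The local sensitivity of `f : D^n → ℝ^d` at `x` (sup of the ℓ¹-change over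
datasets at Hamming distance 1 from `x`). -/
noncomputable def LSf {X : Type*} [Fintype X] [DecidableEq X] {n d : ℕ}
    (f : (Fin n → X) → Fin d → ℝ) (x : Fin n → X) : ℝ :=
  ⨆ y : {y : Fin n → X // hammingDist x y = 1}, ∑ i, |f x i - f (y : Fin n → X) i|

/-- The global sensitivity of `f : D^n → ℝ^d`. -/
noncomputable def GSf {X : Type*} [Fintype X] [DecidableEq X] {n d : ℕ}
    (f : (Fin n → X) → Fin d → ℝ) : ℝ :=
  ⨆ p : {p : (Fin n → X) × (Fin n → X) // hammingDist p.1 p.2 = 1},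
    ∑ i, |f (p : (Fin n → X) × (Fin n → X)).1 i - f (p : (Fin n → X) × (Fin n → X)).2 i|

/-- The `β`-smooth sensitivity of `f` at `x`:
`S*_{f,β}(x) = max_y LS_f(y)·e^{-β·d(y,x)}`. -/
noncomputable def Sstar {X : Type*} [Fintype X] [DecidableEq X] {n d : ℕ}
    (f : (Fin n → X) → Fin d → ℝ) (β : ℝ) (x : Fin n → X) : ℝ :=
  ⨆ y : Fin n → X, LSf f y * Real.exp (-β * (hammingDist y x : ℝ))

/-- `gd(x)`: the shortest Hamming distance from `x` to a dataset whose local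
sensitivity equals the global sensitivity. -/
noncomputable def gd {X : Type*} [Fintype X] [DecidableEq X] {n d : ℕ}
    (f : (Fin n → X) → Fin d → ℝ) (x : Fin n → X) : ℕ :=
  sInf {m : ℕ | ∃ y, LSf f y = GSf f ∧ hammingDist y x = m}

/-- Theorem 4: if `0 < β ≤ min_{x : LS(x) ≠ GS} (1/gd(x))·ln(GS/LS(x))`, then
`S*_{f,β}(x) = GS_f · e^{-β·gd(x)}` for every `x`. -/
theorem stmt6 {X : Type*} [Fintype X] [DecidableEq X] {n d : ℕ}
    (f : (Fin n → X) → Fin d → ℝ) (β : ℝ) (hβ : 0 < β)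
    (hex : ∃ y, LSf f y = GSf f)
    (hpos : ∀ x, LSf f x ≠ GSf f → 0 < LSf f x)
    (hβle : ∀ x, LSf f x ≠ GSf f →
      β ≤ (1 / (gd f x : ℝ)) * Real.log (GSf f / LSf f x)) :
    ∀ x, Sstar f β x = GSf f * Real.exp (-β * (gd f x : ℝ)) := by
  have hGS0 : 0 ≤ GSf f := by
    apply Real.iSup_nonneg
    intro p
    exact Finset.sum_nonneg fun i _ => abs_nonneg _
  have hLS0 : ∀ y, 0 ≤ LSf f y := fun y =>
    Real.iSup_nonneg fun z => Finset.sum_nonneg fun i _ => abs_nonneg _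
  have hLSle : ∀ y, LSf f y ≤ GSf f := by
    intro y
    apply Real.iSup_le _ hGS0
    intro z
    rw [GSf]
    exact le_ciSup (f := fun p : {p : (Fin n → X) × (Fin n → X) // hammingDist p.1 p.2 = 1} =>
        ∑ i, |f (p : (Fin n → X) × (Fin n → X)).1 i - f (p : (Fin n → X) × (Fin n → X)).2 i|)
      (Set.Finite.bddAbove (Set.finite_range _)) ⟨(y, (z : Fin n → X)), z.2⟩
  intro x
  -- the gd set is nonempty for every point
  have hset : ∀ z : Fin n → X,
      {m : ℕ | ∃ y, LSf f y = GSf f ∧ hammingDist y z = m}.Nonempty := by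
    intro z
    obtain ⟨y, hy⟩ := hex
    exact ⟨hammingDist y z, y, hy, rfl⟩
  obtain ⟨y₀, hy₀, hd₀⟩ := Nat.sInf_mem (hset x)
  have hd₀' : hammingDist y₀ x = gd f x := hd₀
  apply le_antisymm
  · -- upper bound
    apply Real.iSup_le _ (mul_nonneg hGS0 (Real.exp_pos _).le)
    intro y
    by_cases hy : LSf f y = GSf f
    · have hge : gd f x ≤ hammingDist y x := Nat.sInf_le ⟨y, hy, rfl⟩
      rw [hy]
      apply mul_le_mul_of_nonneg_left _ hGS0
      apply Real.exp_le_exp.2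
      have : (gd f x : ℝ) ≤ (hammingDist y x : ℝ) := by exact_mod_cast hge
      nlinarith
    · have hLSy := hpos y hy
      have hβy := hβle y hy
      have hgdy : (gd f y : ℝ) ≠ 0 := by
        intro h0
        rw [h0] at hβy
        simp at hβy
        linarith
      have hgdypos : (0 : ℝ) < (gd f y : ℝ) :=
        lt_of_le_of_ne (Nat.cast_nonneg _) (Ne.symm hgdy)
      have hGSpos : 0 < GSf f := lt_of_lt_of_le hLSy (hLSle y)
      have hlog : β * (gd f y : ℝ) ≤ Real.log (GSf f / LSf f y) := by
        have := mul_le_mul_of_nonneg_left hβy hgdypos.le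
        calc β * (gd f y : ℝ) = (gd f y : ℝ) * β := mul_comm _ _
        _ ≤ (gd f y : ℝ) * ((1 / (gd f y : ℝ)) * Real.log (GSf f / LSf f y)) := this
        _ = Real.log (GSf f / LSf f y) := by field_simp
      have hdivpos : 0 < GSf f / LSf f y := div_pos hGSpos hLSy
      have hexp : Real.exp (β * (gd f y : ℝ)) ≤ GSf f / LSf f y :=
        (Real.le_log_iff_exp_le hdivpos).1 hlog
      have hLSbound : LSf f y ≤ GSf f * Real.exp (-β * (gd f y : ℝ)) := by
        have h1 : LSf f y * Real.exp (β * (gd f y : ℝ)) ≤ GSf f :=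
          (le_div_iff₀ hLSy).1 hexp |>.trans_eq rfl |> (fun h => by
            have := (le_div_iff₀ hLSy).1 hexp
            nlinarith [Real.exp_pos (β * (gd f y : ℝ))])
        have hep : 0 < Real.exp (β * (gd f y : ℝ)) := Real.exp_pos _
        have := mul_le_mul_of_nonneg_right h1 (Real.exp_pos (-β * (gd f y : ℝ))).le
        rwa [mul_assoc, ← Real.exp_add, (by ring : β * (gd f y : ℝ) + -β * (gd f y : ℝ) = 0),
          Real.exp_zero, mul_one] at this
      -- triangle inequality: gd x ≤ gd y + d(y,x)
      obtain ⟨y₁, hy₁, hd₁⟩ := Nat.sInf_mem (hset y)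
      have hd₁' : hammingDist y₁ y = gd f y := hd₁
      have htri : gd f x ≤ gd f y + hammingDist y x := by
        have h1 : gd f x ≤ hammingDist y₁ x := Nat.sInf_le ⟨y₁, hy₁, rfl⟩
        have h2 : hammingDist y₁ x ≤ hammingDist y₁ y + hammingDist y x :=
          hammingDist_triangle y₁ y x
        omega
      have htriR : (gd f x : ℝ) ≤ (gd f y : ℝ) + (hammingDist y x : ℝ) := by
        exact_mod_cast htri
      calc LSf f y * Real.exp (-β * (hammingDist y x : ℝ))
          ≤ GSf f * Real.exp (-β * (gd f y : ℝ)) * Real.exp (-β * (hammingDist y x : ℝ)) :=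
            mul_le_mul_of_nonneg_right hLSbound (Real.exp_pos _).le
        _ = GSf f * Real.exp (-β * ((gd f y : ℝ) + (hammingDist y x : ℝ))) := by
            rw [mul_assoc, ← Real.exp_add]; ring_nf
        _ ≤ GSf f * Real.exp (-β * (gd f x : ℝ)) := by
            apply mul_le_mul_of_nonneg_left _ hGS0
            apply Real.exp_le_exp.2
            nlinarith
  · -- lower bound
    have : GSf f * Real.exp (-β * (gd f x : ℝ))
        = LSf f y₀ * Real.exp (-β * (hammingDist y₀ x : ℝ)) := by
      rw [hy₀, hd₀']
    rw [this, Sstar]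
    exact le_ciSup (f := fun y => LSf f y * Real.exp (-β * (hammingDist y x : ℝ)))
      (Set.Finite.bddAbove (Set.finite_range _)) y₀
end

section
/- Let h be an (α,β)-admissible two-sided noise density on ℝ and Z_1,…,Z_m i.i.d. from h. Let S be a β'-smooth upper bound on the local sensitivity of the score u, where α' = α(kε) and β' = β(lε), and let S̄(x) = max_r S(x,r). Then the smooth private selection mechanism M(x) = argmax_{r∈{1,…,m}} { u(x,r) + (S̄(x)/α')·Z_r } satisfies ((k + (m/2)·l)·ε)-differential privacy: Pr[M(x)=r] ≤ exp((k + m l/2)ε)·Pr[M(y)=r] for all neighboring x,y and all r. -/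
open MeasureTheory Set

/-- The event (over the noise vector `z`) that the smooth private selection with
scores `u x ·` and noise scale `c` outputs candidate `r` (ties broken by
returning the smallest index). -/
def selEvent {m : ℕ} (v : Fin m → ℝ) (c : ℝ) (r : Fin m) : Set (Fin m → ℝ) :=
  {z | (∀ s, s < r → v s + c * z s < v r + c * z r) ∧
       (∀ s, r < s → v s + c * z s ≤ v r + c * z r)}


-- aux lemma 1: outer monotonicity of Measure.pi with scalar factors
lemma pi_le_smul_pi {ι : Type*} [Fintype ι] {α : ι → Type*} [∀ i, MeasurableSpace (α i)]
    (μ μ' : ∀ i, Measure (α i)) (c : ι → ENNReal) (hc : ∀ i, c i ≠ ⊤)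
    (h : ∀ i (s : Set (α i)), μ i s ≤ c i * μ' i s) {A : Set (∀ i, α i)}
    (hA : MeasurableSet A) :
    Measure.pi μ A ≤ (∏ i, c i) * Measure.pi μ' A := by
  rw [Measure.pi, Measure.pi, toMeasure_apply _ _ hA, toMeasure_apply _ _ hA]
  have hC : (∏ i, c i) ≠ ⊤ := by
    exact (ENNReal.prod_lt_top (fun i _ => (hc i).lt_top)).ne
  have key : OuterMeasure.pi (fun i => (μ i).toOuterMeasure) ≤
      (∏ i, c i) • OuterMeasure.pi (fun i => (μ' i).toOuterMeasure) := by
    rw [OuterMeasure.pi, OuterMeasure.pi, OuterMeasure.smul_boundedBy hC]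
    refine OuterMeasure.le_boundedBy.2 fun s => ?_
    refine (OuterMeasure.boundedBy_le s).trans ?_
    simp only [Pi.smul_apply, smul_eq_mul, piPremeasure]
    rw [← Finset.prod_mul_distrib]
    exact Finset.prod_le_prod' fun i _ => h i _
  exact key A

-- aux: extend a measurable-set inequality to all sets via measurable hull
lemma le_smul_map_of_meas {ν : Measure ℝ} {c : ENNReal} {ψ φ : ℝ → ℝ}
    (hφ : Measurable φ) (hψφ : ∀ t, ψ (φ t) = t) (hφψ : ∀ t, φ (ψ t) = t)
    (h : ∀ T : Set ℝ, MeasurableSet T → ν T ≤ c * ν (ψ '' T)) :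
    ∀ s : Set ℝ, ν s ≤ c * (ν.map φ) s := by
  intro s
  set B := toMeasurable (ν.map φ) s with hB
  have hBmeas : MeasurableSet B := measurableSet_toMeasurable _ _
  have himg : ψ '' B = φ ⁻¹' B := by
    ext t
    constructor
    · rintro ⟨a, ha, rfl⟩; simpa [hφψ] using ha
    · intro ht; exact ⟨φ t, ht, hψφ t⟩
  calc ν s ≤ ν B := measure_mono (subset_toMeasurable _ _)
    _ ≤ c * ν (ψ '' B) := h B hBmeas
    _ = c * (ν.map φ) B := by rw [himg, Measure.map_apply hφ hBmeas]
    _ = c * (ν.map φ) s := by rw [measure_toMeasurable]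

-- aux: coordinatewise map of a pi measure
lemma pi_map_coord {m : ℕ} (ν : Measure ℝ) [IsProbabilityMeasure ν] (φ : Fin m → ℝ → ℝ)
    (hφ : ∀ i, Measurable (φ i)) :
    (Measure.pi fun _ : Fin m => ν).map (fun w i => φ i (w i)) =
      Measure.pi (fun i => ν.map (φ i)) := by
  haveI : ∀ i, IsProbabilityMeasure (ν.map (φ i)) :=
    fun i => Measure.isProbabilityMeasure_map (hφ i).aemeasurable
  haveI : ∀ i, SigmaFinite (ν.map (φ i)) := fun i => inferInstance
  have hΦ : Measurable (fun w : Fin m → ℝ => fun i => φ i (w i)) :=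
    measurable_pi_lambda _ fun i => (hφ i).comp (measurable_pi_apply i)
  refine (Measure.pi_eq fun s hs => ?_).symm
  rw [Measure.map_apply hΦ (MeasurableSet.univ_pi hs)]
  have : (fun w : Fin m → ℝ => fun i => φ i (w i)) ⁻¹' (univ.pi s) =
      univ.pi (fun i => φ i ⁻¹' s i) := by
    ext w; simp [Set.mem_pi]
  rw [this, Measure.pi_pi]
  exact Finset.prod_congr rfl fun i _ => (Measure.map_apply (hφ i) (hs i)).symm

-- aux: measurability of selEvent


lemma selEvent_measurable {m : ℕ} (v : Fin m → ℝ) (c : ℝ) (r : Fin m) :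
    MeasurableSet (selEvent v c r) := by
  have hrw : selEvent v c r =
      (⋂ s, ⋂ _ : s < r, {z : Fin m → ℝ | v s + c * z s < v r + c * z r}) ∩
      (⋂ s, ⋂ _ : r < s, {z : Fin m → ℝ | v s + c * z s ≤ v r + c * z r}) := by
    ext z; simp [selEvent, Set.mem_iInter]
  rw [hrw]
  have hf : ∀ s : Fin m, Measurable (fun z : Fin m → ℝ => v s + c * z s) :=
    fun s => by fun_prop
  exact ((MeasurableSet.iInter fun s => MeasurableSet.iInter fun _ =>
      measurableSet_lt (hf s) (hf r))).inter
    (MeasurableSet.iInter fun s => MeasurableSet.iInter fun _ =>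
      measurableSet_le (hf s) (hf r))

-- aux: per-coordinate chain for the shifted+dilated coordinate
lemma coord_chain {ν : Measure ℝ} {k l ε α' β' lam : ℝ} (hα : 0 < α') (hlam : |lam| ≤ β')
    (hsliding : ∀ Δ : ℝ, |Δ| ≤ α' → ∀ T : Set ℝ, MeasurableSet T →
      ν T ≤ ENNReal.ofReal (Real.exp (k * ε / 2)) * ν ((· + Δ) '' T))
    (hdilation : ∀ lam : ℝ, |lam| ≤ β' → ∀ T : Set ℝ, MeasurableSet T →
      ν T ≤ ENNReal.ofReal (Real.exp (l * ε / 2)) * ν ((Real.exp lam * ·) '' T)) :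
    ∀ T : Set ℝ, MeasurableSet T →
      ν T ≤ ENNReal.ofReal (Real.exp (k * ε + l * ε / 2)) *
        ν ((fun t => Real.exp lam * (t + 2 * α')) '' T) := by
  intro T hT
  have habs : |α'| ≤ α' := by rw [abs_of_pos hα]
  have himg : ∀ (Δ : ℝ) (U : Set ℝ), (· + Δ) '' U = (· - Δ) ⁻¹' U := by
    intro Δ U; ext t
    constructor
    · rintro ⟨a, ha, rfl⟩; simpa using ha
    · intro ht; exact ⟨t - Δ, ht, by ring⟩
  have hU1 : MeasurableSet ((· + α') '' T) := by
    rw [himg]; exact (measurable_id.sub_const α') hT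
  have h1 : ν T ≤ ENNReal.ofReal (Real.exp (k * ε / 2)) * ν ((· + α') '' T) :=
    hsliding α' habs T hT
  have h2 : ν ((· + α') '' T) ≤
      ENNReal.ofReal (Real.exp (k * ε / 2)) * ν ((· + α') '' ((· + α') '' T)) :=
    hsliding α' habs _ hU1
  have himg2 : (· + α') '' ((· + α') '' T) = (· + 2 * α') '' T := by
    rw [Set.image_image]
    have he : (fun x : ℝ => x + α' + α') = (· + 2 * α') := by funext t; ring
    rw [he]
  have hU2 : MeasurableSet ((· + 2 * α') '' T) := by
    rw [himg]; exact (measurable_id.sub_const (2 * α')) hT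
  have h3 : ν ((· + 2 * α') '' T) ≤
      ENNReal.ofReal (Real.exp (l * ε / 2)) * ν ((Real.exp lam * ·) '' ((· + 2 * α') '' T)) :=
    hdilation lam hlam _ hU2
  have himg3 : (Real.exp lam * ·) '' ((· + 2 * α') '' T) =
      (fun t => Real.exp lam * (t + 2 * α')) '' T := by
    rw [Set.image_image]
  calc ν T ≤ ENNReal.ofReal (Real.exp (k * ε / 2)) * ν ((· + α') '' T) := h1
    _ ≤ ENNReal.ofReal (Real.exp (k * ε / 2)) *
        (ENNReal.ofReal (Real.exp (k * ε / 2)) * ν ((· + 2 * α') '' T)) := by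
        rw [← himg2]; exact mul_le_mul_right h2 _
    _ ≤ ENNReal.ofReal (Real.exp (k * ε / 2)) * (ENNReal.ofReal (Real.exp (k * ε / 2)) *
        (ENNReal.ofReal (Real.exp (l * ε / 2)) *
          ν ((fun t => Real.exp lam * (t + 2 * α')) '' T))) := by
        rw [← himg3]; exact mul_le_mul_right (mul_le_mul_right h3 _) _
    _ = ENNReal.ofReal (Real.exp (k * ε + l * ε / 2)) *
        ν ((fun t => Real.exp lam * (t + 2 * α')) '' T) := by
        rw [← mul_assoc, ← mul_assoc, ← ENNReal.ofReal_mul (Real.exp_pos _).le,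
          ← ENNReal.ofReal_mul (by positivity), ← Real.exp_add, ← Real.exp_add]
        ring_nf
        congr 1; congr 1; congr 1; funext a; ring

lemma coord_all {ν : Measure ℝ} {k l ε α' β' lam : ℝ} (hα : 0 < α') (hlam : |lam| ≤ β')
    (hsliding : ∀ Δ : ℝ, |Δ| ≤ α' → ∀ T : Set ℝ, MeasurableSet T →
      ν T ≤ ENNReal.ofReal (Real.exp (k * ε / 2)) * ν ((· + Δ) '' T))
    (hdilation : ∀ lam : ℝ, |lam| ≤ β' → ∀ T : Set ℝ, MeasurableSet T →
      ν T ≤ ENNReal.ofReal (Real.exp (l * ε / 2)) * ν ((Real.exp lam * ·) '' T))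
    {m : ℕ} (r i : Fin m) :
    ∀ T : Set ℝ, MeasurableSet T →
      ν T ≤ ENNReal.ofReal (Real.exp (if i = r then k * ε + l * ε / 2 else l * ε / 2)) *
        ν ((fun t => Real.exp lam * (t + (if i = r then 2 * α' else 0))) '' T) := by
  intro T hT
  by_cases hi : i = r
  · rw [if_pos hi, if_pos hi]
    exact coord_chain hα hlam hsliding hdilation T hT
  · rw [if_neg hi, if_neg hi]
    have he : (fun t : ℝ => Real.exp lam * (t + 0)) = (fun t => Real.exp lam * t) := by
      funext t; ring
    rw [he]
    exact hdilation lam hlam T hT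

lemma incl {m : ℕ} (ux uy : Fin m → ℝ) (Sx Sy α' lam : ℝ) (hα : 0 < α')
    (hSx : 0 < Sx) (hSy : 0 < Sy) (hexp : Real.exp lam = Sx / Sy) (r : Fin m)
    (hb : ∀ s, |ux s - uy s| ≤ Sx) :
    (fun (w : Fin m → ℝ) i => Real.exp (-lam) * w i - (if i = r then 2 * α' else 0)) ⁻¹'
        selEvent ux (Sx / α') r ⊆ selEvent uy (Sy / α') r := by
  intro w hw
  simp only [Set.mem_preimage, selEvent, Set.mem_setOf_eq] at hw ⊢
  obtain ⟨hw1, hw2⟩ := hw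
  have hεn : Real.exp (-lam) = Sy / Sx := by rw [Real.exp_neg, hexp, inv_div]
  have key : ∀ t : ℝ, Sx / α' * (Real.exp (-lam) * t) = Sy / α' * t := by
    intro t; rw [hεn]; field_simp
  have e2 : Sx / α' * (Real.exp (-lam) * w r - 2 * α') = Sy / α' * w r - 2 * Sx := by
    rw [mul_sub, key]
    have h2 : Sx / α' * (2 * α') = 2 * Sx := by field_simp
    rw [h2]
  constructor
  · intro s hs
    have h0 := hw1 s hs
    rw [if_neg (ne_of_lt hs), sub_zero, key, if_pos trivial, e2] at h0
    have b1 := abs_le.1 (hb s)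
    have b2 := abs_le.1 (hb r)
    linarith [b1.1, b1.2, b2.1, b2.2]
  · intro s hs
    have h0 := hw2 s hs
    rw [if_neg (ne_of_gt hs), sub_zero, key, if_pos trivial, e2] at h0
    have b1 := abs_le.1 (hb s)
    have b2 := abs_le.1 (hb r)
    linarith [b1.1, b1.2, b2.1, b2.2]

lemma prod_c {m : ℕ} (r : Fin m) (a b : ℝ) :
    (∏ i : Fin m, ENNReal.ofReal (Real.exp (if i = r then a + b else b))) =
      ENNReal.ofReal (Real.exp (a + m * b)) := by
  rw [← ENNReal.ofReal_prod_of_nonneg (fun i _ => (Real.exp_pos _).le), ← Real.exp_sum]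
  congr 1
  have h : ∀ i : Fin m, (if i = r then a + b else b) = (if i = r then a else 0) + b := by
    intro i; split <;> simp
  rw [Finset.sum_congr rfl (fun i _ => h i), Finset.sum_add_distrib,
    Finset.sum_ite_eq' Finset.univ r (fun _ => a), Finset.sum_const, Finset.card_univ,
    Fintype.card_fin]
  simp [nsmul_eq_mul]


/-- Theorem 2 (two-sided noise): the smooth private selection
`M(x) = argmax_r { u(x,r) + (max_t S(x,t)/α')·Z_r }` with i.i.d. two-sided noise
`Z_r ∼ ν`, where `ν` satisfies the sliding property with parameter `α' = α(kε)`
at level `kε` and the dilation property with parameter `β' = β(lε)` at level `lε`,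
and `S` is a `β'`-smooth upper bound on the local sensitivity of the score `u`,
satisfies `((k + (m/2)·l)·ε)`-differential privacy. -/
theorem stmt12 {X : Type*} [Fintype X] [DecidableEq X] {n m : ℕ}
    (u S : (Fin n → X) → Fin m → ℝ)
    (ν : Measure ℝ) [IsProbabilityMeasure ν]
    (ε k l α' β' : ℝ) (hε : 0 < ε) (hk : 0 < k) (hl : 0 < l) (hα : 0 < α')
    (hsliding : ∀ Δ : ℝ, |Δ| ≤ α' → ∀ T : Set ℝ, MeasurableSet T →
      ν T ≤ ENNReal.ofReal (Real.exp (k * ε / 2)) * ν ((· + Δ) '' T))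
    (hdilation : ∀ lam : ℝ, |lam| ≤ β' → ∀ T : Set ℝ, MeasurableSet T →
      ν T ≤ ENNReal.ofReal (Real.exp (l * ε / 2)) * ν ((Real.exp lam * ·) '' T))
    (hSpos : ∀ x r, 0 < S x r)
    -- `S` is an upper bound on the local sensitivity of the score `u`:
    (hub : ∀ (r : Fin m) x y, hammingDist x y = 1 → |u x r - u y r| ≤ S x r)
    -- `S` is `β'`-smooth:
    (hsmooth : ∀ (r : Fin m) x y, hammingDist x y = 1 → S x r ≤ Real.exp β' * S y r) :
    ∀ x y, hammingDist x y = 1 → ∀ r : Fin m,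
      (Measure.pi fun _ : Fin m => ν) (selEvent (u x) ((⨆ t, S x t) / α') r) ≤
        ENNReal.ofReal (Real.exp ((k + (m : ℝ) / 2 * l) * ε)) *
          (Measure.pi fun _ : Fin m => ν) (selEvent (u y) ((⨆ t, S y t) / α') r) := by
  intro x y hxy r
  haveI : Nonempty (Fin m) := ⟨r⟩
  set Sx := ⨆ t, S x t with hSxdef
  set Sy := ⨆ t, S y t with hSydef
  have hbx : BddAbove (Set.range (S x)) := (Set.finite_range _).bddAbove
  have hby : BddAbove (Set.range (S y)) := (Set.finite_range _).bddAbove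
  have hSxt : ∀ t, S x t ≤ Sx := fun t => le_ciSup hbx t
  have hSyt : ∀ t, S y t ≤ Sy := fun t => le_ciSup hby t
  have hSx : 0 < Sx := lt_of_lt_of_le (hSpos x r) (hSxt r)
  have hSy : 0 < Sy := lt_of_lt_of_le (hSpos y r) (hSyt r)
  have hyx : hammingDist y x = 1 := by rwa [hammingDist_comm]
  have hxySy : Sx ≤ Real.exp β' * Sy := ciSup_le fun t =>
    (hsmooth t x y hxy).trans (mul_le_mul_of_nonneg_left (hSyt t) (Real.exp_pos β').le)
  have hyxSx : Sy ≤ Real.exp β' * Sx := ciSup_le fun t =>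
    (hsmooth t y x hyx).trans (mul_le_mul_of_nonneg_left (hSxt t) (Real.exp_pos β').le)
  set lam := Real.log (Sx / Sy) with hlamdef
  have hexp : Real.exp lam = Sx / Sy := Real.exp_log (div_pos hSx hSy)
  have hlam : |lam| ≤ β' := by
    rw [hlamdef, Real.log_div hSx.ne' hSy.ne', abs_le]
    constructor
    · have h1 : Real.log Sy ≤ Real.log (Real.exp β' * Sx) := Real.log_le_log hSy hyxSx
      rw [Real.log_mul (Real.exp_ne_zero β') hSx.ne', Real.log_exp] at h1
      linarith
    · have h1 : Real.log Sx ≤ Real.log (Real.exp β' * Sy) := Real.log_le_log hSx hxySy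
      rw [Real.log_mul (Real.exp_ne_zero β') hSy.ne', Real.log_exp] at h1
      linarith
  -- the coordinatewise maps
  have hφmeas : ∀ i : Fin m,
      Measurable (fun t : ℝ => Real.exp (-lam) * t - (if i = r then 2 * α' else 0)) :=
    fun i => (measurable_id.const_mul _).sub_const _
  have hinv1 : ∀ i : Fin m, ∀ t : ℝ,
      (fun t => Real.exp lam * (t + (if i = r then 2 * α' else 0)))
        ((fun t => Real.exp (-lam) * t - (if i = r then 2 * α' else 0)) t) = t := by
    intro i t
    simp only
    have h1 : Real.exp (-lam) * t - (if i = r then 2 * α' else 0) +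
        (if i = r then 2 * α' else 0) = Real.exp (-lam) * t := by ring
    rw [h1, ← mul_assoc, ← Real.exp_add, add_neg_cancel, Real.exp_zero, one_mul]
  have hinv2 : ∀ i : Fin m, ∀ t : ℝ,
      (fun t => Real.exp (-lam) * t - (if i = r then 2 * α' else 0))
        ((fun t => Real.exp lam * (t + (if i = r then 2 * α' else 0))) t) = t := by
    intro i t
    simp only
    rw [← mul_assoc, ← Real.exp_add, neg_add_cancel, Real.exp_zero, one_mul]
    ring
  have hall : ∀ i : Fin m, ∀ s : Set ℝ,
      ν s ≤ ENNReal.ofReal (Real.exp (if i = r then k * ε + l * ε / 2 else l * ε / 2)) *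
        (ν.map (fun t : ℝ => Real.exp (-lam) * t - (if i = r then 2 * α' else 0))) s :=
    fun i => le_smul_map_of_meas (hφmeas i) (hinv1 i) (hinv2 i)
      (coord_all hα hlam hsliding hdilation r i)
  have hA : MeasurableSet (selEvent (u x) (Sx / α') r) := selEvent_measurable _ _ _
  have hcne : ∀ i : Fin m,
      ENNReal.ofReal (Real.exp (if i = r then k * ε + l * ε / 2 else l * ε / 2)) ≠ ⊤ :=
    fun i => ENNReal.ofReal_ne_top
  have step1 := pi_le_smul_pi (fun _ : Fin m => ν)
    (fun i => ν.map (fun t : ℝ => Real.exp (-lam) * t - (if i = r then 2 * α' else 0)))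
    (fun i => ENNReal.ofReal (Real.exp (if i = r then k * ε + l * ε / 2 else l * ε / 2)))
    hcne hall hA
  have hmap := pi_map_coord ν
    (fun i t => Real.exp (-lam) * t - (if i = r then 2 * α' else 0)) hφmeas
  have hΦmeas : Measurable (fun (w : Fin m → ℝ) i =>
      Real.exp (-lam) * w i - (if i = r then 2 * α' else 0)) :=
    measurable_pi_lambda _ fun i => (hφmeas i).comp (measurable_pi_apply i)
  have step2 : Measure.pi (fun i : Fin m =>
      ν.map (fun t : ℝ => Real.exp (-lam) * t - (if i = r then 2 * α' else 0)))
        (selEvent (u x) (Sx / α') r) =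
      (Measure.pi fun _ : Fin m => ν) ((fun (w : Fin m → ℝ) i =>
        Real.exp (-lam) * w i - (if i = r then 2 * α' else 0)) ⁻¹'
          selEvent (u x) (Sx / α') r) := by
    rw [← hmap, Measure.map_apply hΦmeas hA]
  have hb : ∀ s : Fin m, |u x s - u y s| ≤ Sx :=
    fun s => (hub s x y hxy).trans (hSxt s)
  have step3 := incl (u x) (u y) Sx Sy α' lam hα hSx hSy hexp r hb
  have step4 : (∏ i : Fin m,
      ENNReal.ofReal (Real.exp (if i = r then k * ε + l * ε / 2 else l * ε / 2))) =
      ENNReal.ofReal (Real.exp ((k + (m : ℝ) / 2 * l) * ε)) := by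
    have h := prod_c r (k * ε) (l * ε / 2)
    rw [h]
    congr 1
    ring
  calc (Measure.pi fun _ : Fin m => ν) (selEvent (u x) (Sx / α') r)
      ≤ (∏ i : Fin m,
          ENNReal.ofReal (Real.exp (if i = r then k * ε + l * ε / 2 else l * ε / 2))) *
        Measure.pi (fun i : Fin m =>
          ν.map (fun t : ℝ => Real.exp (-lam) * t - (if i = r then 2 * α' else 0)))
          (selEvent (u x) (Sx / α') r) := step1
    _ = ENNReal.ofReal (Real.exp ((k + (m : ℝ) / 2 * l) * ε)) *
        (Measure.pi fun _ : Fin m => ν) ((fun (w : Fin m → ℝ) i =>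
          Real.exp (-lam) * w i - (if i = r then 2 * α' else 0)) ⁻¹'
            selEvent (u x) (Sx / α') r) := by rw [step2, step4]
    _ ≤ ENNReal.ofReal (Real.exp ((k + (m : ℝ) / 2 * l) * ε)) *
        (Measure.pi fun _ : Fin m => ν) (selEvent (u y) (Sy / α') r) :=
      mul_le_mul_right (measure_mono step3) _
end

section
/- Under the same setup as the two-sided case, if instead the noise variables Z_r are i.i.d. from the one-sided density g(z) = h(z)/∫_{w≥0} h(w) dw for z ≥ 0 and g(z)=0 for z < 0 (where h is two-sided, symmetric and decreasing on [0,∞)), then the smooth private selection mechanism satisfies ((k + ((m−1)/2)·l)·ε)-differential privacy. -/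
/-!
Noise vectors `z` that make `x` select `r` are mapped coordinatewise to noise vectors that make the
neighbouring database `y` select `r`, and the sliding and dilation properties bound the density
ratio of each coordinate map. Since one-sided noise is nonnegative, it suffices to transport the
event on the positive orthant. If the scale does not shrink (`Mx ≤ My`), the winner's noise is
shifted by `2α'` and every loser's noise is rescaled by `Mx / My`, at a cost of
`kε + (m - 1) lε / 2`. If it shrinks, only the winner's noise is shifted and rescaled; the losers'
noise terms `My / α' * z` then cannot grow because `z ≥ 0`, at a cost of `kε + lε / 2`, which is
within the bound as soon as there are two candidates (with one, the mechanism is constant).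
-/

open MeasureTheory

open Set
open scoped ENNReal

theorem Real.abs_log_div_le {a b β : ℝ} (ha : 0 < a) (hb : 0 < b) (hab : a ≤ Real.exp β * b)
    (hba : b ≤ Real.exp β * a) : |Real.log (a / b)| ≤ β := by
  have hab' := Real.log_le_log ha hab
  have hba' := Real.log_le_log hb hba
  rw [Real.log_mul (Real.exp_ne_zero β) hb.ne', Real.log_exp] at hab'
  rw [Real.log_mul (Real.exp_ne_zero β) ha.ne', Real.log_exp] at hba'
  rw [abs_le, Real.log_div ha.ne' hb.ne']
  constructor <;> linarith

theorem ENNReal.ofReal_exp_mul_pow (a b : ℝ) (n : ℕ) :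
    ENNReal.ofReal (Real.exp a) * ENNReal.ofReal (Real.exp b) ^ n =
      ENNReal.ofReal (Real.exp (a + n * b)) := by
  rw [← ENNReal.ofReal_pow (Real.exp_nonneg b), ← Real.exp_nat_mul,
    ← ENNReal.ofReal_mul (Real.exp_nonneg a), ← Real.exp_add]

theorem Fin.prod_update_const {M : Type*} [CommMonoid M] {m : ℕ} (r : Fin m) (a b : M) :
    ∏ s, Function.update (fun _ => b) r a s = a * b ^ (m - 1) := by
  simp [Finset.prod_update_of_mem, Finset.card_univ_sdiff]

namespace MeasureTheory.Measure

variable {ι : Type*} [Fintype ι] {α : ι → Type*} [∀ i, MeasurableSpace (α i)]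

theorem pi_mono {μ κ : ∀ i, Measure (α i)} (h : ∀ i, μ i ≤ κ i) :
    Measure.pi μ ≤ Measure.pi κ := by
  refine le_iff.mpr fun A hA => ?_
  rw [Measure.pi, Measure.pi, toMeasure_apply _ _ hA, toMeasure_apply _ _ hA]
  refine (OuterMeasure.le_boundedBy.mpr fun t => ?_) A
  exact (OuterMeasure.boundedBy_le t).trans <| Finset.prod_le_prod' fun i _ => h i _

theorem pi_smul (c : ι → ℝ≥0∞) (hc : ∀ i, c i ≠ ∞) (μ : ∀ i, Measure (α i))
    [∀ i, IsFiniteMeasure (μ i)] :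
    Measure.pi (fun i => c i • μ i) = (∏ i, c i) • Measure.pi μ := by
  have (i : ι) : IsFiniteMeasure (c i • μ i) := ⟨by
    simpa using ENNReal.mul_lt_top (hc i).lt_top (measure_lt_top (μ i) univ)⟩
  refine pi_eq fun s hs => ?_
  simp only [smul_apply, pi_pi, smul_eq_mul, Finset.prod_mul_distrib]

end MeasureTheory.Measure

theorem eq_smul_restrict_of_eq_withDensity {h : ℝ → ℝ} (hh : ∀ z, 0 ≤ z → 0 ≤ h z) {Z : ℝ}
    {ν : Measure ℝ} [IsProbabilityMeasure ν]
    (hν : ν = volume.withDensity fun z => ENNReal.ofReal (if 0 ≤ z then h z / Z else 0)) :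
    ν = (ENNReal.ofReal Z)⁻¹ •
      (volume.withDensity fun z => ENNReal.ofReal (h z)).restrict (Ici 0) := by
  have hZ : 0 < Z := by
    by_contra! hZ
    have : (fun z => ENNReal.ofReal (if 0 ≤ z then h z / Z else 0)) = 0 := by
      funext z
      split_ifs with hz
      · exact ENNReal.ofReal_eq_zero.mpr (div_nonpos_of_nonneg_of_nonpos (hh z hz) hZ)
      · simp
    exact IsProbabilityMeasure.ne_zero ν (by rw [hν, this, withDensity_zero])
  rw [hν, restrict_withDensity measurableSet_Ici, ← withDensity_indicator measurableSet_Ici,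
    ← withDensity_smul' _ _ (by simpa using hZ)]
  congr 1
  funext z
  by_cases hz : 0 ≤ z <;> simp [hz, ENNReal.ofReal_div_of_pos hZ, ENNReal.div_eq_inv_mul]

-- The sliding and dilation properties of the noise distribution are instances of this, for
-- translations and dilations.
def MassBound {α : Type*} [MeasurableSpace α] (μ : Measure α) (e : α ≃ᵐ α) (C : ℝ≥0∞) : Prop :=
  ∀ T, MeasurableSet T → μ T ≤ C * μ (e '' T)

namespace MassBound

variable {α : Type*} [MeasurableSpace α] {μ : Measure α} {e e' : α ≃ᵐ α} {C C' : ℝ≥0∞}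

theorem refl (μ : Measure α) : MassBound μ (MeasurableEquiv.refl α) 1 := by
  intro T _
  simp

theorem trans (he : MassBound μ e C) (he' : MassBound μ e' C') :
    MassBound μ (e.trans e') (C * C') := by
  intro T hT
  calc μ T ≤ C * μ (e '' T) := he T hT
    _ ≤ C * (C' * μ (e' '' (e '' T))) := by gcongr; exact he' _ (e.measurableSet_image.mpr hT)
    _ = C * C' * μ (e.trans e' '' T) := by rw [← mul_assoc, ← image_comp]; rfl

theorem smul (he : MassBound μ e C) (c : ℝ≥0∞) : MassBound (c • μ) e C := by
  intro T hT
  simp only [Measure.smul_apply, smul_eq_mul, mul_left_comm C]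
  gcongr
  exact he T hT

theorem restrict (he : MassBound μ e C) {s : Set α} (hs : MeasurableSet s) (hes : MapsTo e s s) :
    MassBound (μ.restrict s) e C := by
  intro T hT
  rw [Measure.restrict_apply' hs, Measure.restrict_apply' hs]
  calc μ (T ∩ s) ≤ C * μ (e '' (T ∩ s)) := he _ (hT.inter hs)
    _ ≤ C * μ (e '' T ∩ s) := by
      gcongr
      exact subset_inter (image_mono inter_subset_left)
        ((image_mono inter_subset_right).trans hes.image_subset)

theorem le_smul_map (he : MassBound μ e C) : μ ≤ C • μ.map e.symm :=
  Measure.le_iff.mpr fun T hT => by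
    rw [Measure.smul_apply, smul_eq_mul, MeasurableEquiv.map_apply, MeasurableEquiv.preimage_symm]
    exact he T hT

theorem pi {ι : Type*} [Fintype ι] {α : ι → Type*} [∀ i, MeasurableSpace (α i)]
    {μ : ∀ i, Measure (α i)} [∀ i, IsFiniteMeasure (μ i)] {e : ∀ i, α i ≃ᵐ α i}
    {C : ι → ℝ≥0∞} (hC : ∀ i, C i ≠ ∞) (he : ∀ i, MassBound (μ i) (e i) (C i)) :
    MassBound (Measure.pi μ) (MeasurableEquiv.piCongrRight e) (∏ i, C i) := by
  intro T _
  have hmap : Measure.pi (fun i => (μ i).map (e i).symm) =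
      (Measure.pi μ).map (MeasurableEquiv.piCongrRight e).symm :=
    (Measure.pi_map_pi fun i => (e i).symm.measurable.aemeasurable).symm
  calc Measure.pi μ T ≤ Measure.pi (fun i => C i • (μ i).map (e i).symm) T :=
        Measure.pi_mono (fun i => (he i).le_smul_map) T
    _ = (∏ i, C i) * Measure.pi μ (MeasurableEquiv.piCongrRight e '' T) := by
      rw [Measure.pi_smul C hC, hmap, Measure.smul_apply, smul_eq_mul,
        MeasurableEquiv.map_apply, MeasurableEquiv.preimage_symm]

end MassBound

section Selection

variable {m : ℕ} {v v' : Fin m → ℝ} {c c' M : ℝ} {r : Fin m}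

theorem measurableSet_selEvent (v : Fin m → ℝ) (c : ℝ) (r : Fin m) :
    MeasurableSet (selEvent v c r) := by
  have hf (s : Fin m) : Measurable fun z : Fin m → ℝ => v s + c * z s := by fun_prop
  simp only [selEvent, ofPred_and, ofPred_forall]
  exact (MeasurableSet.iInter fun s => .iInter fun _ => measurableSet_lt (hf s) (hf r)).inter
    (MeasurableSet.iInter fun s => .iInter fun _ => measurableSet_le (hf s) (hf r))

theorem selEvent_eq_univ [Subsingleton (Fin m)] : selEvent v c r = univ :=
  eq_univ_of_forall fun _ =>
    ⟨fun s hs => absurd hs (Subsingleton.elim s r ▸ lt_irrefl r),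
     fun s hs => absurd hs (Subsingleton.elim s r ▸ lt_irrefl r)⟩

theorem mem_selEvent_of_le {z w : Fin m → ℝ} (hz : z ∈ selEvent v c r)
    (hv : ∀ s, |v s - v' s| ≤ M) (hlose : ∀ s, s ≠ r → c' * w s ≤ c * z s)
    (hwin : c * z r + 2 * M ≤ c' * w r) : w ∈ selEvent v' c' r := by
  have key (s : Fin m) (hs : s ≠ r) : v' s + c' * w s - (v' r + c' * w r) ≤
      v s + c * z s - (v r + c * z r) := by
    have := hlose s hs
    linarith [abs_le.mp (hv s), abs_le.mp (hv r)]
  exact ⟨fun s hs => by linarith [hz.1 s hs, key s hs.ne],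
    fun s hs => by linarith [hz.2 s hs, key s hs.ne']⟩

theorem pi_selEvent_le {ν : Measure ℝ} [IsFiniteMeasure ν] (hν : ∀ᵐ z ∂ν, 0 ≤ z)
    {e : Fin m → ℝ ≃ᵐ ℝ} {C : Fin m → ℝ≥0∞} (hC : ∀ s, C s ≠ ∞)
    (he : ∀ s, MassBound ν (e s) (C s)) (hv : ∀ s, |v s - v' s| ≤ M)
    (hlose : ∀ s, s ≠ r → ∀ z, 0 ≤ z → c' * e s z ≤ c * z)
    (hwin : ∀ z, 0 ≤ z → c * z + 2 * M ≤ c' * e r z) :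
    Measure.pi (fun _ => ν) (selEvent v c r) ≤
      (∏ s, C s) * Measure.pi (fun _ => ν) (selEvent v' c' r) := by
  set Q : Set (Fin m → ℝ) := univ.pi fun _ => Ici 0
  have hQ : Measure.pi (fun _ => ν) Qᶜ = 0 := by
    refine ae_iff.mp (ae_all_iff.mpr fun s => ?_)
    filter_upwards [(Measure.quasiMeasurePreserving_eval (fun _ : Fin m => ν) s).ae hν]
      with z hz _ using hz
  have hsub : MeasurableEquiv.piCongrRight e '' (selEvent v c r ∩ Q) ⊆ selEvent v' c' r := by
    rintro _ ⟨z, ⟨hz, hzQ⟩, rfl⟩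
    simp only [Q, mem_univ_pi, mem_Ici] at hzQ
    exact mem_selEvent_of_le hz hv (fun s hs => hlose s hs _ (hzQ s)) (hwin _ (hzQ r))
  calc Measure.pi (fun _ => ν) (selEvent v c r)
      = Measure.pi (fun _ => ν) (selEvent v c r ∩ Q) := (measure_inter_conull hQ).symm
    _ ≤ (∏ s, C s) *
          Measure.pi (fun _ => ν) (MeasurableEquiv.piCongrRight e '' (selEvent v c r ∩ Q)) :=
      MassBound.pi hC he _
        ((measurableSet_selEvent v c r).inter (.univ_pi fun _ => measurableSet_Ici))
    _ ≤ _ := by gcongr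

end Selection

section Coupling

variable {m : ℕ} {ν : Measure ℝ} [IsFiniteMeasure ν] {v v' : Fin m → ℝ} {M M' a : ℝ}
  {r : Fin m} {A B : ℝ≥0∞} {t d : ℝ ≃ᵐ ℝ}

theorem pi_selEvent_le_of_le (hν : ∀ᵐ z ∂ν, 0 ≤ z) (ha : 0 < a) (hM' : 0 < M') (hMM' : M ≤ M')
    (hv : ∀ s, |v s - v' s| ≤ M) (hA : A ≠ ∞) (hB : B ≠ ∞)
    (ht : ∀ z, t z = z + 2 * a) (hd : ∀ z, d z = M / M' * z)
    (htA : MassBound ν t A) (hdB : MassBound ν d B) :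
    Measure.pi (fun _ => ν) (selEvent v (M / a) r) ≤
      A * B ^ (m - 1) * Measure.pi (fun _ => ν) (selEvent v' (M' / a) r) := by
  rw [← Fin.prod_update_const r A B]
  refine pi_selEvent_le hν (e := Function.update (fun _ => d) r t) (fun s => ?_) (fun s => ?_) hv
    (fun s hs z _ => ?_) (fun z hz => ?_)
  · rcases eq_or_ne s r with rfl | hs <;> simp [*]
  · rcases eq_or_ne s r with rfl | hs <;> simp [*]
  · rw [Function.update_of_ne hs, hd]
    exact le_of_eq (by field_simp)
  · rw [Function.update_self, ht, mul_add, show M' / a * (2 * a) = 2 * M' by field_simp]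
    have : M / a * z ≤ M' / a * z := by gcongr
    linarith

theorem pi_selEvent_le_of_ge (hν : ∀ᵐ z ∂ν, 0 ≤ z) (ha : 0 < a) (hM' : 0 < M') (hMM' : M' ≤ M)
    (hv : ∀ s, |v s - v' s| ≤ M) (hA : A ≠ ∞) (hB : B ≠ ∞)
    (ht : ∀ z, t z = z + 2 * a) (hd : ∀ z, d z = M / M' * z)
    (htA : MassBound ν t A) (hdB : MassBound ν d B) :
    Measure.pi (fun _ => ν) (selEvent v (M / a) r) ≤
      A * B * Measure.pi (fun _ => ν) (selEvent v' (M' / a) r) := by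
  have := Fin.prod_update_const r (A * B) 1
  rw [one_pow, mul_one] at this
  rw [← this]
  refine pi_selEvent_le hν (e := Function.update (fun _ => MeasurableEquiv.refl ℝ) r (t.trans d))
    (fun s => ?_) (fun s => ?_) hv (fun s hs z hz => ?_) (fun z hz => ?_)
  · rcases eq_or_ne s r with rfl | hs <;> simp [*, ENNReal.mul_ne_top]
  · rcases eq_or_ne s r with rfl | hs
    · simpa using htA.trans hdB
    · simpa [hs] using MassBound.refl ν
  · rw [Function.update_of_ne hs, MeasurableEquiv.refl_apply]
    gcongr
  · rw [Function.update_self, MeasurableEquiv.trans_apply, hd, ht]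
    exact le_of_eq (by field_simp)

theorem pi_selEvent_le_of_shift_of_dilate (hν : ∀ᵐ z ∂ν, 0 ≤ z) (ha : 0 < a) (hM' : 0 < M') (hv : ∀ s, |v s - v' s| ≤ M)
    (hA : A ≠ ∞) (hB : B ≠ ∞) (hA1 : 1 ≤ A) (hB1 : 1 ≤ B)
    (ht : ∀ z, t z = z + 2 * a) (hd : ∀ z, d z = M / M' * z)
    (htA : MassBound ν t A) (hdB : MassBound ν d B) :
    Measure.pi (fun _ => ν) (selEvent v (M / a) r) ≤
      A * B ^ (m - 1) * Measure.pi (fun _ => ν) (selEvent v' (M' / a) r) := by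
  rcases subsingleton_or_nontrivial (Fin m) with hm | hm
  · rw [selEvent_eq_univ, selEvent_eq_univ]
    exact le_mul_of_one_le_left zero_le (one_le_mul hA1 (one_le_pow₀ hB1))
  rcases le_total M M' with hMM' | hMM'
  · exact pi_selEvent_le_of_le hν ha hM' hMM' hv hA hB ht hd htA hdB
  · calc _ ≤ A * B * Measure.pi (fun _ => ν) (selEvent v' (M' / a) r) :=
          pi_selEvent_le_of_ge hν ha hM' hMM' hv hA hB ht hd htA hdB
      _ ≤ _ := by
        have : 1 ≤ m - 1 := by have := Fin.nontrivial_iff_two_le.mp hm; omega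
        gcongr
        exact le_self_pow₀ hB1 (by omega)

end Coupling

theorem pi_selEvent_le_of_sliding_of_dilation {m : ℕ} {ν₀ ν : Measure ℝ}
    [IsFiniteMeasure ν] {c : ℝ≥0∞} (hν : ν = c • ν₀.restrict (Ici 0)) {a b α β : ℝ}
    (ha : 0 ≤ a) (hb : 0 ≤ b) (hα : 0 < α)
    (hsliding : ∀ Δ, |Δ| ≤ α →
      MassBound ν₀ (.addRight Δ) (.ofReal (Real.exp (a / 2))))
    (hdilation : ∀ lam, |lam| ≤ β →
      MassBound ν₀ (.mulLeft₀ _ (Real.exp_ne_zero lam)) (.ofReal (Real.exp (b / 2))))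
    {v v' : Fin m → ℝ} {M M' : ℝ} {r : Fin m} (hM : 0 < M) (hM' : 0 < M')
    (hMM' : M ≤ Real.exp β * M') (hM'M : M' ≤ Real.exp β * M) (hv : ∀ s, |v s - v' s| ≤ M) :
    Measure.pi (fun _ => ν) (selEvent v (M / α) r) ≤
      .ofReal (Real.exp (a + ((m : ℝ) - 1) * (b / 2))) *
        Measure.pi (fun _ => ν) (selEvent v' (M' / α) r) := by
  have lift {e C} (he : MassBound ν₀ e C) (hmaps : MapsTo e (Ici 0) (Ici 0)) : MassBound ν e C :=
    hν ▸ (he.restrict measurableSet_Ici hmaps).smul c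
  have hslide : MassBound ν (.addRight α) (.ofReal (Real.exp (a / 2))) :=
    lift (hsliding α (abs_of_pos hα).le) fun z (hz : 0 ≤ z) => by
      simp only [MeasurableEquiv.coe_addRight, mem_Ici]; linarith
  have hshift : MassBound ν ((MeasurableEquiv.addRight α).trans (.addRight α))
      (.ofReal (Real.exp a)) := by
    convert hslide.trans hslide using 1
    rw [← ENNReal.ofReal_mul (Real.exp_nonneg _), ← Real.exp_add, add_halves]
  have hdil := lift (hdilation _ (Real.abs_log_div_le hM hM' hMM' hM'M)) fun z (hz : 0 ≤ z) => by
    simp only [MeasurableEquiv.coe_mulLeft₀, mem_Ici]; positivity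
  have hexp {t : ℝ} (ht : 0 ≤ t) : 1 ≤ ENNReal.ofReal (Real.exp t) := by simpa using ht
  refine (pi_selEvent_le_of_shift_of_dilate (hν ▸ Measure.ae_smul_measure
    (ae_restrict_mem measurableSet_Ici) c) hα hM' hv (by simp) (by simp) (hexp ha)
    (hexp (by positivity)) (fun z => ?_) (fun z => ?_) hshift hdil).trans_eq ?_
  · simp only [MeasurableEquiv.trans_apply, MeasurableEquiv.coe_addRight]
    ring
  · simp [Real.exp_log (div_pos hM hM')]
  · rw [ENNReal.ofReal_exp_mul_pow, Nat.cast_pred r.pos]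

/-- Theorem 3 (one-sided noise): with the same setup as the two-sided case, but
with the noise variables `Z_r` i.i.d. from the one-sided density
`g(z) = h(z)/∫_{w ≥ 0} h(w) dw` for `z ≥ 0` and `g(z) = 0` for `z < 0`
(where the two-sided density `h` satisfies `h(z) > h(z') > 0` for `0 ≤ z < z'`,
and the measure with density `h` satisfies the sliding property with parameter
`α' = α(kε)` at level `kε` and the dilation property with parameter `β' = β(lε)`
at level `lε`), the smooth private selection satisfies
`((k + ((m-1)/2)·l)·ε)`-differential privacy. -/
theorem stmt13 {X : Type*} [Fintype X] [DecidableEq X] {n m : ℕ}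
    (u S : (Fin n → X) → Fin m → ℝ)
    (h : ℝ → ℝ)
    (hdec : ∀ z z' : ℝ, 0 ≤ z → z < z' → h z' < h z ∧ 0 < h z')
    (ν₀ : Measure ℝ)
    (hν₀ : ν₀ = volume.withDensity fun z => ENNReal.ofReal (h z))
    (ν : Measure ℝ) [IsProbabilityMeasure ν]
    (hν : ν = volume.withDensity fun z =>
      ENNReal.ofReal (if 0 ≤ z then h z / ∫ w in Set.Ici (0 : ℝ), h w else 0))
    (ε k l α' β' : ℝ) (hε : 0 < ε) (hk : 0 < k) (hl : 0 < l) (hα : 0 < α')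
    (hsliding : ∀ Δ : ℝ, |Δ| ≤ α' → ∀ T : Set ℝ, MeasurableSet T →
      ν₀ T ≤ ENNReal.ofReal (Real.exp (k * ε / 2)) * ν₀ ((· + Δ) '' T))
    (hdilation : ∀ lam : ℝ, |lam| ≤ β' → ∀ T : Set ℝ, MeasurableSet T →
      ν₀ T ≤ ENNReal.ofReal (Real.exp (l * ε / 2)) * ν₀ ((Real.exp lam * ·) '' T))
    (hSpos : ∀ x r, 0 < S x r)
    -- `S` is an upper bound on the local sensitivity of the score `u`:
    (hub : ∀ (r : Fin m) x y, hammingDist x y = 1 → |u x r - u y r| ≤ S x r)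
    -- `S` is `β'`-smooth:
    (hsmooth : ∀ (r : Fin m) x y, hammingDist x y = 1 → S x r ≤ Real.exp β' * S y r) :
    ∀ x y, hammingDist x y = 1 → ∀ r : Fin m,
      (Measure.pi fun _ : Fin m => ν) (selEvent (u x) ((⨆ t, S x t) / α') r) ≤
        ENNReal.ofReal (Real.exp ((k + ((m : ℝ) - 1) / 2 * l) * ε)) *
          (Measure.pi fun _ : Fin m => ν) (selEvent (u y) ((⨆ t, S y t) / α') r) := by
  intro x y hxy r
  have hh (z : ℝ) (hz : 0 ≤ z) : 0 ≤ h z := by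
    obtain ⟨hlt, hpos⟩ := hdec z (z + 1) hz (lt_add_one z)
    exact (hpos.trans hlt).le
  have hνeq := eq_smul_restrict_of_eq_withDensity hh hν
  rw [← hν₀] at hνeq
  have hsup (x y) (hxy : hammingDist x y = 1) : ⨆ t, S x t ≤ Real.exp β' * ⨆ t, S y t := by
    rw [Real.mul_iSup_of_nonneg (Real.exp_pos β').le]
    exact ciSup_mono (Finite.bddAbove_range _) (hsmooth · x y hxy)
  have hpos (x) : 0 < ⨆ t, S x t := (hSpos x r).trans_le (le_ciSup (Finite.bddAbove_range _) r)
  rw [show (k + ((m : ℝ) - 1) / 2 * l) * ε = k * ε + ((m : ℝ) - 1) * (l * ε / 2) by ring]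
  exact pi_selEvent_le_of_sliding_of_dilation hνeq (by positivity) (by positivity) hα hsliding
    hdilation (hpos x) (hpos y) (hsup x y hxy) (hsup y x (by rwa [hammingDist_comm]))
    fun s => (hub s x y hxy).trans (le_ciSup (Finite.bddAbove_range _) s)
end

section
/- The Hamming distance (minimum number of families that must change) between two TDT tables T(b,c) and T(b',c') over N families equals ⌈|(b+c)−(b'+c')|/2⌉ when (b−b')(c−c') ≥ 0, and equals ⌈max{|b−b'|, |c−c'|}/2⌉ when (b−b')(c−c') < 0. -/
open scoped BigOperators

/-- A TDT dataset over `N` families: each family contributes a pair of counts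
`(bᵢ, cᵢ)` to the off-diagonal cells, with `bᵢ + cᵢ ≤ 2` (one unit per parent). -/
def validTDT {N : ℕ} (x : Fin N → ℕ × ℕ) : Prop :=
  ∀ i, (x i).1 + (x i).2 ≤ 2

/-- The Hamming distance between TDT tables `T(b,c)` and `T(b',c')` over `N`
families: the minimum, over datasets realizing the two tables, of the number of
families in which they differ. -/
noncomputable def tdtDist (N b c b' c' : ℕ) : ℕ :=
  sInf {k : ℕ | ∃ x y : Fin N → ℕ × ℕ, validTDT x ∧ validTDT y ∧
    (∑ i, (x i).1) = b ∧ (∑ i, (x i).2) = c ∧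
    (∑ i, (y i).1) = b' ∧ (∑ i, (y i).2) = c' ∧ hammingDist x y = k}

lemma mySumPair (n : ℕ) (f : ℕ → ℕ) :
    ∑ i ∈ Finset.range n, (f (2*i) + f (2*i+1)) = ∑ j ∈ Finset.range (2*n), f j := by
  induction n with
  | zero => simp
  | succ n ih =>
      rw [Finset.sum_range_succ, ih, show 2*(n+1) = (2*n+1)+1 by ring,
        Finset.sum_range_succ, Finset.sum_range_succ]; ring

lemma mySumInd (n a b : ℕ) (hb : b ≤ n) :
    ∑ j ∈ Finset.range n, (if a ≤ j ∧ j < b then (1:ℕ) else 0) = b - a := by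
  classical
  rw [← Finset.card_filter]
  have : (Finset.range n).filter (fun j => a ≤ j ∧ j < b) = Finset.Ico a b := by
    ext j; simp only [Finset.mem_filter, Finset.mem_range, Finset.mem_Ico]; omega
  rw [this, Nat.card_Ico]

lemma myCardLt (N m : ℕ) (h : m ≤ N) :
    (Finset.univ.filter fun i : Fin N => (i:ℕ) < m).card = m := by
  classical
  rw [Finset.card_filter]
  rw [Fin.sum_univ_eq_sum_range (fun j => if j < m then (1:ℕ) else 0) N]
  have := mySumInd N 0 m h
  simp only [Nat.zero_le, true_and] at this
  omega

lemma myHammingDef {N : ℕ} (x y : Fin N → ℕ × ℕ) :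
    hammingDist x y = (Finset.univ.filter fun i => x i ≠ y i).card := rfl

/-- A piecewise constant "slot assignment": value `u` on `[0,a₁)`, nothing on
`[a₁,a₂)`, a `B`-unit on `[a₂,a₃)`, a `C`-unit on `[a₃,a₄)`, nothing after. -/
def mySeg (a₁ a₂ a₃ a₄ : ℕ) (u : ℕ × ℕ) : ℕ → ℕ × ℕ := fun j =>
  if j < a₁ then u else if j < a₂ then (0,0) else if j < a₃ then (1,0)
  else if j < a₄ then (0,1) else (0,0)

lemma mySeg_fst (n a₁ a₂ a₃ a₄ : ℕ) (u : ℕ × ℕ) (h12 : a₁ ≤ a₂) (h23 : a₂ ≤ a₃)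
    (h34 : a₃ ≤ a₄) (hn : a₄ ≤ n) :
    ∑ j ∈ Finset.range n, (mySeg a₁ a₂ a₃ a₄ u j).1 = u.1 * a₁ + (a₃ - a₂) := by
  have e : ∀ j, (mySeg a₁ a₂ a₃ a₄ u j).1 =
      u.1 * (if 0 ≤ j ∧ j < a₁ then 1 else 0) + (if a₂ ≤ j ∧ j < a₃ then 1 else 0) := by
    intro j; unfold mySeg; split_ifs <;> (try simp) <;> omega
  rw [Finset.sum_congr rfl fun j _ => e j, Finset.sum_add_distrib, ← Finset.mul_sum,
    mySumInd _ _ _ (by omega), mySumInd _ _ _ (by omega), Nat.sub_zero]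

lemma mySeg_snd (n a₁ a₂ a₃ a₄ : ℕ) (u : ℕ × ℕ) (h12 : a₁ ≤ a₂) (h23 : a₂ ≤ a₃)
    (h34 : a₃ ≤ a₄) (hn : a₄ ≤ n) :
    ∑ j ∈ Finset.range n, (mySeg a₁ a₂ a₃ a₄ u j).2 = u.2 * a₁ + (a₄ - a₃) := by
  have e : ∀ j, (mySeg a₁ a₂ a₃ a₄ u j).2 =
      u.2 * (if 0 ≤ j ∧ j < a₁ then 1 else 0) + (if a₃ ≤ j ∧ j < a₄ then 1 else 0) := by
    intro j; unfold mySeg; split_ifs <;> (try simp) <;> omega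
  rw [Finset.sum_congr rfl fun j _ => e j, Finset.sum_add_distrib, ← Finset.mul_sum,
    mySumInd _ _ _ (by omega), mySumInd _ _ _ (by omega), Nat.sub_zero]

lemma mySeg_valid (a₁ a₂ a₃ a₄ : ℕ) (u : ℕ × ℕ) (hu : u.1 + u.2 ≤ 1) (j : ℕ) :
    (mySeg a₁ a₂ a₃ a₄ u j).1 + (mySeg a₁ a₂ a₃ a₄ u j).2 ≤ 1 := by
  unfold mySeg; split_ifs <;> (try simp) <;> omega

lemma mySeg_eq (a₁ a₂ b₁ b₂ a₃ a₄ m : ℕ) (u v : ℕ × ℕ)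
    (h : a₁ ≤ m ∧ a₂ ≤ m ∧ b₁ ≤ m ∧ b₂ ≤ m) (j : ℕ) (hj : m ≤ j) :
    mySeg a₁ a₂ a₃ a₄ u j = mySeg b₁ b₂ a₃ a₄ v j := by
  unfold mySeg; split_ifs <;> first | rfl | omega

lemma myConstruct (N b c b' c' M : ℕ) (g h : ℕ → ℕ × ℕ) (φ : ℕ × ℕ → ℤ)
    (hM : M ≤ 2*N)
    (hg : ∀ j, (g j).1 + (g j).2 ≤ 1)
    (hh : ∀ j, (h j).1 + (h j).2 ≤ 1)
    (hadd : ∀ u v : ℕ × ℕ, φ (u.1 + v.1, u.2 + v.2) = φ u + φ v)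
    (hlt : ∀ j, j < M → φ (h j) < φ (g j))
    (heq : ∀ j, M ≤ j → g j = h j)
    (hb : ∑ j ∈ Finset.range (2*N), (g j).1 = b)
    (hc : ∑ j ∈ Finset.range (2*N), (g j).2 = c)
    (hb' : ∑ j ∈ Finset.range (2*N), (h j).1 = b')
    (hc' : ∑ j ∈ Finset.range (2*N), (h j).2 = c') :
    ∃ x y : Fin N → ℕ × ℕ, validTDT x ∧ validTDT y ∧
      (∑ i, (x i).1) = b ∧ (∑ i, (x i).2) = c ∧
      (∑ i, (y i).1) = b' ∧ (∑ i, (y i).2) = c' ∧ hammingDist x y = (M+1)/2 := by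
  classical
  refine ⟨fun i => ((g (2*(i:ℕ))).1 + (g (2*(i:ℕ)+1)).1, (g (2*(i:ℕ))).2 + (g (2*(i:ℕ)+1)).2),
    fun i => ((h (2*(i:ℕ))).1 + (h (2*(i:ℕ)+1)).1, (h (2*(i:ℕ))).2 + (h (2*(i:ℕ)+1)).2),
    ?_, ?_, ?_, ?_, ?_, ?_, ?_⟩
  · intro i; have := hg (2*(i:ℕ)); have := hg (2*(i:ℕ)+1); simp only; omega
  · intro i; have := hh (2*(i:ℕ)); have := hh (2*(i:ℕ)+1); simp only; omega
  · rw [Fin.sum_univ_eq_sum_range (fun j => (g (2*j)).1 + (g (2*j+1)).1) N]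
    exact (mySumPair N (fun j => (g j).1)).trans hb
  · rw [Fin.sum_univ_eq_sum_range (fun j => (g (2*j)).2 + (g (2*j+1)).2) N]
    exact (mySumPair N (fun j => (g j).2)).trans hc
  · rw [Fin.sum_univ_eq_sum_range (fun j => (h (2*j)).1 + (h (2*j+1)).1) N]
    exact (mySumPair N (fun j => (h j).1)).trans hb'
  · rw [Fin.sum_univ_eq_sum_range (fun j => (h (2*j)).2 + (h (2*j+1)).2) N]
    exact (mySumPair N (fun j => (h j).2)).trans hc'
  · rw [myHammingDef]
    have hset : (Finset.univ.filter fun i : Fin N =>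
        ((g (2*(i:ℕ))).1 + (g (2*(i:ℕ)+1)).1, (g (2*(i:ℕ))).2 + (g (2*(i:ℕ)+1)).2) ≠
        ((h (2*(i:ℕ))).1 + (h (2*(i:ℕ)+1)).1, (h (2*(i:ℕ))).2 + (h (2*(i:ℕ)+1)).2)) =
        Finset.univ.filter fun i : Fin N => (i:ℕ) < (M+1)/2 := by
      ext i
      simp only [Finset.mem_filter, Finset.mem_univ, true_and]
      constructor
      · intro hne
        by_contra hge
        push_neg at hge
        rw [heq _ (by omega : M ≤ 2*(i:ℕ)), heq _ (by omega : M ≤ 2*(i:ℕ)+1)] at hne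
        exact hne rfl
      · intro hi hEq
        have h2i : 2*(i:ℕ) < M := by omega
        have k1 := hlt _ h2i
        have k2 : φ (h (2*(i:ℕ)+1)) ≤ φ (g (2*(i:ℕ)+1)) := by
          rcases lt_or_ge (2*(i:ℕ)+1) M with hm | hm
          · exact (hlt _ hm).le
          · rw [heq _ hm]
        have e1 := hadd (g (2*(i:ℕ))) (g (2*(i:ℕ)+1))
        have e2 := hadd (h (2*(i:ℕ))) (h (2*(i:ℕ)+1))
        rw [hEq] at e1
        omega
    rw [hset, myCardLt]
    omega

lemma myLower (N : ℕ) (x y : Fin N → ℕ × ℕ) (f : ℕ × ℕ → ℤ)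
    (hbd : ∀ i, |f (x i) - f (y i)| ≤ 2) :
    |(∑ i, f (x i)) - ∑ i, f (y i)| ≤ 2 * (hammingDist x y : ℤ) := by
  classical
  rw [← Finset.sum_sub_distrib]
  have h1 : ∑ i : Fin N, (f (x i) - f (y i)) =
      ∑ i ∈ Finset.univ.filter (fun i => x i ≠ y i), (f (x i) - f (y i)) := by
    refine (Finset.sum_filter_of_ne ?_).symm
    intro i _ hne hxy
    exact hne (by rw [hxy]; ring)
  rw [h1, myHammingDef]
  calc |∑ i ∈ Finset.univ.filter (fun i => x i ≠ y i), (f (x i) - f (y i))|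
      ≤ ∑ i ∈ Finset.univ.filter (fun i => x i ≠ y i), |f (x i) - f (y i)| :=
        Finset.abs_sum_le_sum_abs _ _
    _ ≤ ∑ _i ∈ Finset.univ.filter (fun i => x i ≠ y i), 2 :=
        Finset.sum_le_sum (fun i _ => hbd i)
    _ = 2 * ((Finset.univ.filter fun i => x i ≠ y i).card : ℤ) := by
        rw [Finset.sum_const]; ring

lemma myTdtEq (N b c b' c' k₀ : ℕ)
    (hmem : k₀ ∈ {k : ℕ | ∃ x y : Fin N → ℕ × ℕ, validTDT x ∧ validTDT y ∧
      (∑ i, (x i).1) = b ∧ (∑ i, (x i).2) = c ∧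
      (∑ i, (y i).1) = b' ∧ (∑ i, (y i).2) = c' ∧ hammingDist x y = k})
    (hlb : ∀ k ∈ {k : ℕ | ∃ x y : Fin N → ℕ × ℕ, validTDT x ∧ validTDT y ∧
      (∑ i, (x i).1) = b ∧ (∑ i, (x i).2) = c ∧
      (∑ i, (y i).1) = b' ∧ (∑ i, (y i).2) = c' ∧ hammingDist x y = k}, k₀ ≤ k) :
    tdtDist N b c b' c' = k₀ :=
  le_antisymm (Nat.sInf_le hmem) (hlb _ (Nat.sInf_mem ⟨k₀, hmem⟩))

lemma myTdtComm (N b c b' c' : ℕ) : tdtDist N b c b' c' = tdtDist N b' c' b c := by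
  unfold tdtDist
  congr 1
  ext k
  constructor <;> rintro ⟨x, y, v1, v2, e1, e2, e3, e4, e5⟩ <;>
    exact ⟨y, x, v2, v1, e3, e4, e1, e2, by rw [hammingDist_comm]; exact e5⟩

lemma myBounds {N : ℕ} (x y : Fin N → ℕ × ℕ) (hx : validTDT x) (hy : validTDT y) :
    (((∑ i, (x i).1 : ℕ) : ℤ) - ((∑ i, (y i).1 : ℕ) : ℤ)).natAbs ≤ 2 * hammingDist x y ∧
    (((∑ i, (x i).2 : ℕ) : ℤ) - ((∑ i, (y i).2 : ℕ) : ℤ)).natAbs ≤ 2 * hammingDist x y ∧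
    ((((∑ i, (x i).1 : ℕ) : ℤ) + ((∑ i, (x i).2 : ℕ) : ℤ))
      - (((∑ i, (y i).1 : ℕ) : ℤ) + ((∑ i, (y i).2 : ℕ) : ℤ))).natAbs
      ≤ 2 * hammingDist x y := by
  have H1 := myLower N x y (fun u => (u.1 : ℤ)) (fun i => by
    have := hx i; have := hy i; rw [abs_le]; constructor <;> simp <;> omega)
  have H2 := myLower N x y (fun u => (u.2 : ℤ)) (fun i => by
    have := hx i; have := hy i; rw [abs_le]; constructor <;> simp <;> omega)
  have H3 := myLower N x y (fun u => (u.1 : ℤ) + u.2) (fun i => by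
    have := hx i; have := hy i; rw [abs_le]; constructor <;> simp <;> omega)
  simp only [Finset.sum_add_distrib] at H3
  have cx1 : ((∑ i, (x i).1 : ℕ) : ℤ) = ∑ i, ((x i).1 : ℤ) := by push_cast; rfl
  have cx2 : ((∑ i, (x i).2 : ℕ) : ℤ) = ∑ i, ((x i).2 : ℤ) := by push_cast; rfl
  have cy1 : ((∑ i, (y i).1 : ℕ) : ℤ) = ∑ i, ((y i).1 : ℤ) := by push_cast; rfl
  have cy2 : ((∑ i, (y i).2 : ℕ) : ℤ) = ∑ i, ((y i).2 : ℤ) := by push_cast; rfl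
  rw [← cx1, ← cy1] at H1
  rw [← cx2, ← cy2] at H2
  rw [← cx1, ← cy1, ← cx2, ← cy2] at H3
  rw [abs_le] at H1 H2 H3
  refine ⟨?_, ?_, ?_⟩ <;> omega

lemma myCase1 (N b c b' c' : ℕ) (h1 : b + c ≤ 2*N) (hbb : b' ≤ b) (hcc : c' ≤ c) :
    tdtDist N b c b' c' = ((c - c') + (b - b') + 1) / 2 := by
  classical
  set M := (c - c') + (b - b') with hMdef
  apply myTdtEq
  · exact myConstruct N b c b' c' M
      (mySeg (c - c') (c - c') (M + b') (M + b' + c') (0,1))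
      (mySeg M M (M + b') (M + b' + c') (0,0))
      (fun u => (u.1 : ℤ) + u.2)
      (by omega)
      (mySeg_valid _ _ _ _ _ (by simp))
      (mySeg_valid _ _ _ _ _ (by simp))
      (fun u v => by push_cast; ring)
      (fun j hj => by
        unfold mySeg; split_ifs <;> (try simp) <;> omega)
      (fun j hj => mySeg_eq _ _ _ _ _ _ M _ _ (by omega) j hj)
      ((mySeg_fst (2*N) _ _ _ _ _ (by omega) (by omega) (by omega) (by omega)).trans
        (by simp <;> omega))
      ((mySeg_snd (2*N) _ _ _ _ _ (by omega) (by omega) (by omega) (by omega)).trans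
        (by simp <;> omega))
      ((mySeg_fst (2*N) _ _ _ _ _ (by omega) (by omega) (by omega) (by omega)).trans
        (by simp <;> omega))
      ((mySeg_snd (2*N) _ _ _ _ _ (by omega) (by omega) (by omega) (by omega)).trans
        (by simp <;> omega))
  · rintro k ⟨x, y, v1, v2, e1, e2, e3, e4, e5⟩
    obtain ⟨-, -, H⟩ := myBounds x y v1 v2
    rw [e1, e2, e3, e4, e5] at H
    omega

lemma myCase2 (N b c b' c' : ℕ) (h1 : b + c ≤ 2*N) (h2 : b' + c' ≤ 2*N)
    (hbb : b' ≤ b) (hcc : c ≤ c') :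
    tdtDist N b c b' c' = (max (b - b') (c' - c) + 1) / 2 := by
  classical
  have hMc := max_choice (b - b') (c' - c)
  set M := max (b - b') (c' - c) with hMdef
  have hMp : b - b' ≤ M := le_max_left _ _
  have hMq : c' - c ≤ M := le_max_right _ _
  apply myTdtEq
  · exact myConstruct N b c b' c' M
      (mySeg (b - b') M (M + b') (M + b' + c) (1,0))
      (mySeg (c' - c) M (M + b') (M + b' + c) (0,1))
      (fun u => (u.1 : ℤ) - u.2)
      (by omega)
      (mySeg_valid _ _ _ _ _ (by simp))
      (mySeg_valid _ _ _ _ _ (by simp))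
      (fun u v => by push_cast; ring)
      (fun j hj => by
        unfold mySeg; split_ifs <;> (try simp) <;> omega)
      (fun j hj => mySeg_eq _ _ _ _ _ _ M _ _ (by omega) j hj)
      ((mySeg_fst (2*N) _ _ _ _ _ (by omega) (by omega) (by omega) (by omega)).trans
        (by simp <;> omega))
      ((mySeg_snd (2*N) _ _ _ _ _ (by omega) (by omega) (by omega) (by omega)).trans
        (by simp <;> omega))
      ((mySeg_fst (2*N) _ _ _ _ _ (by omega) (by omega) (by omega) (by omega)).trans
        (by simp <;> omega))
      ((mySeg_snd (2*N) _ _ _ _ _ (by omega) (by omega) (by omega) (by omega)).trans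
        (by simp <;> omega))
  · rintro k ⟨x, y, v1, v2, e1, e2, e3, e4, e5⟩
    obtain ⟨H1, H2, -⟩ := myBounds x y v1 v2
    rw [e1, e3, e5] at H1
    rw [e2, e4, e5] at H2
    omega

/-- Lemma 3: the Hamming distance between TDT tables `T(b,c)` and `T(b',c')` is
`⌈|(b+c)−(b'+c')|/2⌉` when `(b−b')(c−c') ≥ 0`, and
`⌈max{|b−b'|, |c−c'|}/2⌉` when `(b−b')(c−c') < 0`. -/
theorem stmt14 (N b c b' c' : ℕ) (h1 : b + c ≤ 2 * N) (h2 : b' + c' ≤ 2 * N) :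
    tdtDist N b c b' c' =
      if 0 ≤ ((b : ℤ) - b') * ((c : ℤ) - c') then
        ((((b : ℤ) + c) - (((b' : ℤ) + c'))).natAbs + 1) / 2
      else
        (max ((b : ℤ) - b').natAbs ((c : ℤ) - c').natAbs + 1) / 2 := by
  by_cases hsign : 0 ≤ ((b : ℤ) - b') * ((c : ℤ) - c')
  · rw [if_pos hsign]
    have key : (b' ≤ b ∧ c' ≤ c) ∨ (b ≤ b' ∧ c ≤ c') := by
      rcases le_total b' b with hb1 | hb1 <;> rcases le_total c' c with hc1 | hc1
      · exact Or.inl ⟨hb1, hc1⟩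
      · have : b = b' ∨ c = c' := by
          by_contra hcon
          push_neg at hcon
          have hZ1 : (0:ℤ) < (b:ℤ) - b' := by omega
          have hZ2 : ((c:ℤ) - c') < 0 := by omega
          have := mul_neg_of_pos_of_neg hZ1 hZ2
          linarith
        rcases this with h | h
        · exact Or.inr ⟨by omega, hc1⟩
        · exact Or.inl ⟨hb1, by omega⟩
      · have : b = b' ∨ c = c' := by
          by_contra hcon
          push_neg at hcon
          have hZ1 : ((b:ℤ) - b') < 0 := by omega
          have hZ2 : (0:ℤ) < (c:ℤ) - c' := by omega
          have := mul_neg_of_neg_of_pos hZ1 hZ2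
          linarith
        rcases this with h | h
        · exact Or.inl ⟨by omega, hc1⟩
        · exact Or.inr ⟨hb1, by omega⟩
      · exact Or.inr ⟨hb1, hc1⟩
    rcases key with ⟨hb', hc'⟩ | ⟨hb', hc'⟩
    · rw [myCase1 N b c b' c' h1 hb' hc']
      omega
    · rw [myTdtComm, myCase1 N b' c' b c h2 hb' hc']
      omega
  · rw [if_neg hsign]
    push_neg at hsign
    have key : (b' ≤ b ∧ c ≤ c') ∨ (b ≤ b' ∧ c' ≤ c) := by
      rcases le_total b' b with hb1 | hb1 <;> rcases le_total c c' with hc1 | hc1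
      · exact Or.inl ⟨hb1, hc1⟩
      · exfalso
        have : (0:ℤ) ≤ ((b:ℤ) - b') * ((c:ℤ) - c') :=
          mul_nonneg (by omega) (by omega)
        linarith
      · exfalso
        have h3 : (0:ℤ) ≤ (-((b:ℤ) - b')) * (-((c:ℤ) - c')) :=
          mul_nonneg (by omega) (by omega)
        rw [neg_mul_neg] at h3
        linarith
      · exact Or.inr ⟨hb1, hc1⟩
    rcases key with ⟨hb', hc'⟩ | ⟨hb', hc'⟩
    · rw [myCase2 N b c b' c' h1 h2 hb' hc']
      omega
    · rw [myTdtComm, myCase2 N b' c' b c h2 h1 hb' hc']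
      omega
end

section
/- The global sensitivity of the TDT statistic χ²(b,c) = (b−c)²/(b+c) (with χ²(0,0)=0), under neighboring datasets differing in one family of N families (so b+c ≤ 2N and one family can change (b,c) by at most (±2, ∓2) or shift b+c by up to 2), equals 8(N−1)/N. -/
/-
Write `χ² = d²/s` with `d = b - c ≥ 0` and `s = b + c ≤ 2N`. If `d ≤ 4` then `χ² ≤ d ≤ 4`.
Otherwise, changing one family moves `d` by at most `4 - |s' - s|`, so `χ²` drops by at most
`d²/s - (d - 4 + |s' - s|)²/s'`, and clearing denominators shows this is at most
`8 - 16/max s s' ≤ 8 - 16/(2N) = 8(N-1)/N`. Equality holds for `(2N, 0)` and `(2N - 2, 2)`,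
where one family is flipped from `(2, 0)` to `(0, 2)`.
-/

open scoped BigOperators

/-- The TDT statistic `χ²(b,c) = (b−c)²/(b+c)`, with `χ²(0,0) = 0`. -/
noncomputable def chiTDT (b c : ℕ) : ℝ :=
  if b + c = 0 then 0 else ((b : ℝ) - (c : ℝ)) ^ 2 / ((b : ℝ) + (c : ℝ))

section HammingSum

variable {ι M : Type*} [Fintype ι] [DecidableEq ι]

lemma sum_update_add_self [AddCommMonoid M] (f : ι → M) (i : ι) (a : M) :
    ∑ j, Function.update f i a j + f i = ∑ j, f j + a := by
  rw [Finset.sum_update_of_mem (Finset.mem_univ i), Finset.sdiff_singleton_eq_erase,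
    ← Finset.add_sum_erase _ _ (Finset.mem_univ i)]
  abel

lemma hammingDist_update_self [DecidableEq M] (f : ι → M) {i : ι} {a : M} (h : f i ≠ a) :
    hammingDist f (Function.update f i a) = 1 := by
  rw [hammingDist, Finset.card_eq_one]
  refine ⟨i, Finset.ext fun j => ?_⟩
  by_cases hj : j = i <;> simp [hj, h]

lemma exists_sum_eq_add_of_hammingDist_eq_one [AddCommMonoid M] [DecidableEq M] {x y : ι → M}
    (h : hammingDist x y = 1) : ∃ i t, ∑ j, x j = x i + t ∧ ∑ j, y j = y i + t := by
  obtain ⟨i, hi⟩ := Finset.card_eq_one.mp h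
  have hxy : ∀ j ∈ Finset.univ.erase i, x j = y j := fun j hj => by
    by_contra hne
    have : j ∈ ({i} : Finset ι) := hi ▸ Finset.mem_filter.mpr ⟨Finset.mem_univ j, hne⟩
    exact (Finset.mem_erase.mp hj).1 (Finset.mem_singleton.mp this)
  refine ⟨i, ∑ j ∈ Finset.univ.erase i, x j,
    (Finset.add_sum_erase _ _ (Finset.mem_univ i)).symm, ?_⟩
  rw [Finset.sum_congr rfl hxy, Finset.add_sum_erase _ _ (Finset.mem_univ i)]

end HammingSum

lemma exists_family_decomp_of_tdtDist_eq_one {N b c b' c' : ℕ}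
    (h : tdtDist N b c b' c' = 1) :
    ∃ f f' t : ℕ × ℕ, f.1 + f.2 ≤ 2 ∧ f'.1 + f'.2 ≤ 2 ∧ (b, c) = f + t ∧ (b', c') = f' + t := by
  unfold tdtDist at h
  have hmem := Nat.sInf_mem (Nat.nonempty_of_sInf_eq_succ h)
  rw [h] at hmem
  obtain ⟨x, y, hx, hy, rfl, rfl, rfl, rfl, hxy⟩ := hmem
  obtain ⟨i, t, hxt, hyt⟩ := exists_sum_eq_add_of_hammingDist_eq_one hxy
  refine ⟨x i, y i, t, hx i, hy i, ?_, ?_⟩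
  · rw [← hxt]
    ext <;> simp [Prod.fst_sum, Prod.snd_sum]
  · rw [← hyt]
    ext <;> simp [Prod.fst_sum, Prod.snd_sum]

lemma tdtDist_update_eq_one {N : ℕ} {x : Fin N → ℕ × ℕ} (hx : validTDT x) {i : Fin N}
    {a : ℕ × ℕ} (ha : a.1 + a.2 ≤ 2) (hne : x i ≠ a) :
    tdtDist N (∑ j, x j).1 (∑ j, x j).2
      (∑ j, Function.update x i a j).1 (∑ j, Function.update x i a j).2 = 1 := by
  have hy : validTDT (Function.update x i a) := fun j => by
    rw [Function.update_apply]
    split_ifs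
    exacts [ha, hx j]
  have hmem : 1 ∈ {k : ℕ | ∃ x' y' : Fin N → ℕ × ℕ, validTDT x' ∧ validTDT y' ∧
      (∑ j, (x' j).1) = (∑ j, x j).1 ∧ (∑ j, (x' j).2) = (∑ j, x j).2 ∧
      (∑ j, (y' j).1) = (∑ j, Function.update x i a j).1 ∧
      (∑ j, (y' j).2) = (∑ j, Function.update x i a j).2 ∧ hammingDist x' y' = k} :=
    ⟨x, _, hx, hy, Prod.fst_sum.symm, Prod.snd_sum.symm, Prod.fst_sum.symm, Prod.snd_sum.symm,
      hammingDist_update_self x hne⟩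
  refine le_antisymm (Nat.sInf_le hmem) (Nat.one_le_iff_ne_zero.2 fun h0 => hne ?_)
  have hmem₀ := Nat.sInf_mem ⟨1, hmem⟩
  rw [← tdtDist, h0] at hmem₀
  obtain ⟨x', y', -, -, hb, hc, hb', hc', hxy⟩ := hmem₀
  obtain rfl := hammingDist_eq_zero.mp hxy
  have hsum : ∑ j, Function.update x i a j = ∑ j, x j :=
    Prod.ext (hb'.symm.trans hb) (hc'.symm.trans hc)
  have := sum_update_add_self x i a
  rw [hsum] at this
  exact add_left_cancel this

lemma tdtDist_two_mul {N : ℕ} (hN : 1 ≤ N) : tdtDist N (2 * N) 0 (2 * N - 2) 2 = 1 := by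
  have h := tdtDist_update_eq_one (x := fun _ => ((2 : ℕ), (0 : ℕ))) (i := ⟨0, hN⟩) (a := (0, 2))
    (fun _ => le_rfl) le_rfl (by simp)
  have hsum := sum_update_add_self (fun _ : Fin N => ((2 : ℕ), (0 : ℕ))) ⟨0, hN⟩ (0, 2)
  simp only [Finset.sum_const, Finset.card_univ, Fintype.card_fin, Prod.smul_mk, smul_eq_mul,
    Prod.ext_iff, Prod.fst_add, Prod.snd_add] at hsum h
  convert h using 2 <;> omega

noncomputable def chiReal (b c : ℝ) : ℝ := (b - c) ^ 2 / (b + c)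

-- Division by zero returns `0` in `ℝ`, which is exactly the convention `χ²(0,0) = 0`.
lemma chiTDT_eq_chiReal (b c : ℕ) : chiTDT b c = chiReal b c := by
  unfold chiTDT chiReal
  split_ifs with h
  · obtain ⟨rfl, rfl⟩ : b = 0 ∧ c = 0 := by omega
    simp
  · rfl

lemma chiReal_comm (b c : ℝ) : chiReal c b = chiReal b c := by
  rw [chiReal, chiReal, add_comm, ← neg_sub, neg_sq]

lemma chiReal_nonneg {b c : ℝ} (hb : 0 ≤ b) (hc : 0 ≤ c) : 0 ≤ chiReal b c := by
  unfold chiReal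
  positivity

lemma chiReal_le_sub {b c : ℝ} (hc : 0 ≤ c) (hcb : c ≤ b) : chiReal b c ≤ b - c :=
  div_le_of_le_mul₀ (by linarith) (by linarith) (by nlinarith)

lemma sq_div_sub_sq_div_le {d s d' s' : ℝ} (hs : 0 < s) (hs' : 0 < s') (hd : 4 ≤ d)
    (hds : d ≤ s) (hd' : d - 4 + |s' - s| ≤ d') :
    d ^ 2 / s - d' ^ 2 / s' ≤ 8 - 16 / max s s' := by
  -- After clearing denominators the slack is `8s(s - d) + e d (2s - d) + s e²` for
  -- `e = s' - s ≥ 0`, and `8(s - d)s' + (d - 4)² f + 2(d - 4) f s + f² s` for `f = s - s' ≥ 0`.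
  rcases le_total s s' with hss | hss
  · rw [abs_of_nonneg (sub_nonneg.2 hss)] at hd'
    have hmono : (d - 4 + (s' - s)) ^ 2 / s' ≤ d' ^ 2 / s' := by gcongr
    have key : d ^ 2 / s - (d - 4 + (s' - s)) ^ 2 / s' ≤ 8 - 16 / s' := by
      rw [div_sub_div _ _ hs.ne' hs'.ne', show 8 - 16 / s' = (8 * s' - 16) * s / (s * s') by
        field_simp]
      refine div_le_div_of_nonneg_right ?_ (by positivity)
      nlinarith [mul_nonneg hs.le (sub_nonneg.2 hds),
        mul_nonneg (mul_nonneg (sub_nonneg.2 hss) (by linarith : 0 ≤ d))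
          (by linarith : 0 ≤ 2 * s - d),
        mul_nonneg hs.le (sq_nonneg (s' - s))]
    rw [max_eq_right hss]
    linarith
  · rw [abs_sub_comm, abs_of_nonneg (sub_nonneg.2 hss)] at hd'
    have hmono : (d - 4 + (s - s')) ^ 2 / s' ≤ d' ^ 2 / s' := by gcongr
    have key : d ^ 2 / s - (d - 4 + (s - s')) ^ 2 / s' ≤ 8 - 16 / s := by
      rw [div_sub_div _ _ hs.ne' hs'.ne', show 8 - 16 / s = (8 * s - 16) * s' / (s * s') by
        field_simp]
      refine div_le_div_of_nonneg_right ?_ (by positivity)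
      nlinarith [mul_nonneg (sub_nonneg.2 hds) hs'.le,
        mul_nonneg (sq_nonneg (d - 4)) (sub_nonneg.2 hss),
        mul_nonneg (mul_nonneg (by linarith : 0 ≤ d - 4) (sub_nonneg.2 hss)) hs.le,
        mul_nonneg (sq_nonneg (s - s')) hs.le]
    rw [max_eq_left hss]
    linarith

lemma chiReal_sub_chiReal_le_of_le {N b c b' c' : ℝ} (hN : 2 ≤ N) (hc : 0 ≤ c) (hcb : c ≤ b)
    (hb' : 0 ≤ b') (hc' : 0 ≤ c') (hbb' : b - b' ≤ 2) (hcc' : c' - c ≤ 2)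
    (hs : b + c ≤ 2 * N) (hs' : b' + c' ≤ 2 * N) :
    chiReal b c - chiReal b' c' ≤ 8 * (N - 1) / N := by
  have hC : 8 * (N - 1) / N = 8 - 16 / (2 * N) := by
    field_simp
    ring
  rcases le_total (b - c) 4 with hd | hd
  · have h4 : 4 ≤ 8 - 16 / (2 * N) := by
      rw [le_sub_comm, div_le_iff₀ (by linarith)]
      linarith
    linarith [chiReal_le_sub hc hcb, chiReal_nonneg hb' hc']
  · -- With `e` the change of `b + c`, the change of `b - c` is both `2 (c' - c) - e` and
    -- `2 (b - b') + e`.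
    have hd' : b - c - 4 + |b' + c' - (b + c)| ≤ b' - c' := by
      have : |b' + c' - (b + c)| ≤ b' - c' - (b - c) + 4 := abs_le'.2 ⟨by linarith, by linarith⟩
      linarith
    have hpos' : 0 < b' + c' := by
      linarith [neg_abs_le (b' + c' - (b + c))]
    calc chiReal b c - chiReal b' c' ≤ 8 - 16 / max (b + c) (b' + c') :=
          sq_div_sub_sq_div_le (by linarith) hpos' hd (by linarith) hd'
      _ ≤ 8 * (N - 1) / N := by
          rw [hC]
          gcongr
          exact max_le hs hs'

lemma chiReal_sub_chiReal_le {N b c b' c' : ℝ} (hN : 2 ≤ N) (hb : 0 ≤ b) (hc : 0 ≤ c)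
    (hb' : 0 ≤ b') (hc' : 0 ≤ c') (hbb' : |b - b'| ≤ 2) (hcc' : |c - c'| ≤ 2)
    (hs : b + c ≤ 2 * N) (hs' : b' + c' ≤ 2 * N) :
    chiReal b c - chiReal b' c' ≤ 8 * (N - 1) / N := by
  rw [abs_le] at hbb' hcc'
  rcases le_total c b with hcb | hbc
  · exact chiReal_sub_chiReal_le_of_le hN hc hcb hb' hc' (by linarith) (by linarith) hs hs'
  · rw [← chiReal_comm b, ← chiReal_comm b']
    exact chiReal_sub_chiReal_le_of_le hN hb hbc hc' hb' (by linarith) (by linarith)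
      (by linarith) (by linarith)

lemma abs_chiTDT_sub_chiTDT_le {N b c b' c' : ℕ} (hN : 2 ≤ N) (hs : b + c ≤ 2 * N)
    (hs' : b' + c' ≤ 2 * N) (h : tdtDist N b c b' c' = 1) :
    |chiTDT b c - chiTDT b' c'| ≤ 8 * ((N : ℝ) - 1) / N := by
  obtain ⟨f, f', t, hf, hf', hbc, hbc'⟩ := exists_family_decomp_of_tdtDist_eq_one h
  simp only [Prod.ext_iff, Prod.fst_add, Prod.snd_add] at hbc hbc'
  have abs_sub_le_two : ∀ m n : ℕ, m ≤ n + 2 → n ≤ m + 2 → |(m : ℝ) - n| ≤ 2 :=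
    fun m n h₁ h₂ => abs_sub_le_iff.2
      ⟨by linarith [show (m : ℝ) ≤ n + 2 by exact_mod_cast h₁],
        by linarith [show (n : ℝ) ≤ m + 2 by exact_mod_cast h₂]⟩
  have hbb' := abs_sub_le_two b b' (by omega) (by omega)
  have hcc' := abs_sub_le_two c c' (by omega) (by omega)
  have hN' : (2 : ℝ) ≤ N := by exact_mod_cast hN
  have hsR : (b : ℝ) + c ≤ 2 * N := by exact_mod_cast hs
  have hsR' : (b' : ℝ) + c' ≤ 2 * N := by exact_mod_cast hs'
  rw [chiTDT_eq_chiReal, chiTDT_eq_chiReal, abs_sub_le_iff]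
  exact ⟨chiReal_sub_chiReal_le hN' (by positivity) (by positivity) (by positivity)
      (by positivity) hbb' hcc' hsR hsR',
    chiReal_sub_chiReal_le hN' (by positivity) (by positivity) (by positivity)
      (by positivity) (abs_sub_comm (b : ℝ) b' ▸ hbb') (abs_sub_comm (c : ℝ) c' ▸ hcc') hsR' hsR⟩

lemma chiTDT_two_mul_sub {N : ℕ} (hN : 1 ≤ N) :
    chiTDT (2 * N) 0 - chiTDT (2 * N - 2) 2 = 8 * ((N : ℝ) - 1) / N := by
  have hN' : (N : ℝ) ≠ 0 := by positivity
  rw [chiTDT_eq_chiReal, chiTDT_eq_chiReal, chiReal, chiReal, Nat.cast_sub (by omega)]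
  push_cast
  rw [sub_zero, add_zero, sub_add_cancel]
  field_simp
  ring

/-- The global sensitivity of the TDT statistic over `N` families (neighboring
datasets differ in exactly one family) equals `8(N−1)/N`. -/
theorem stmt15 (N : ℕ) (hN : 2 ≤ N) :
    (⨆ p : {p : (ℕ × ℕ) × (ℕ × ℕ) //
        p.1.1 + p.1.2 ≤ 2 * N ∧ p.2.1 + p.2.2 ≤ 2 * N ∧
        tdtDist N p.1.1 p.1.2 p.2.1 p.2.2 = 1},
      |chiTDT (p : (ℕ × ℕ) × (ℕ × ℕ)).1.1 (p : (ℕ × ℕ) × (ℕ × ℕ)).1.2 -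
        chiTDT (p : (ℕ × ℕ) × (ℕ × ℕ)).2.1 (p : (ℕ × ℕ) × (ℕ × ℕ)).2.2|) =
      8 * ((N : ℝ) - 1) / (N : ℝ) := by
  refine IsGreatest.csSup_eq ⟨⟨⟨((2 * N, 0), (2 * N - 2, 2)), by simp, by simp; omega,
    tdtDist_two_mul (by omega)⟩, ?_⟩, ?_⟩
  · have hN' : (0 : ℝ) ≤ N - 1 := by
      rw [sub_nonneg]
      exact_mod_cast (by omega : 1 ≤ N)
    change |chiTDT (2 * N) 0 - chiTDT (2 * N - 2) 2| = _
    rw [chiTDT_two_mul_sub (by omega), abs_of_nonneg (by positivity)]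
  · rintro _ ⟨⟨⟨⟨b, c⟩, b', c'⟩, hs, hs', hdist⟩, rfl⟩
    exact abs_chiTDT_sub_chiTDT_le hN hs hs' hdist
end

section
/- For the TDT statistic χ²(b,c) = (b−c)²/(b+c), the local sensitivity at (b,c) exceeds 6 if and only if 0 ≤ c < (b−8)/7, or 2 ≤ b < (c+8)/7, or 0 ≤ b < (c−8)/7, or 2 ≤ c < (b+8)/7. -/
/-- `(b',c')` is obtainable from `(b,c)` by changing the contribution of one
family: a family contributing `(p₁,p₂)` with `p₁ + p₂ ≤ 2` is replaced by one
contributing `(q₁,q₂)` with `q₁ + q₂ ≤ 2`. -/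
def tdtNeighbor (b c b' c' : ℕ) : Prop :=
  ∃ p q : ℕ × ℕ, p.1 + p.2 ≤ 2 ∧ q.1 + q.2 ≤ 2 ∧ p.1 ≤ b ∧ p.2 ≤ c ∧
    b' = b - p.1 + q.1 ∧ c' = c - p.2 + q.2

lemma chiTDT_nonneg (b c : ℕ) : 0 ≤ chiTDT b c := by
  unfold chiTDT; split
  · exact le_refl 0
  · positivity

lemma cast_pos_of_ne (b c : ℕ) (h : b + c ≠ 0) : (0:ℝ) < (b:ℝ) + c := by
  have := Nat.pos_of_ne_zero h
  exact_mod_cast this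

lemma chiTDT_le (b c : ℕ) : chiTDT b c ≤ (b : ℝ) + c := by
  unfold chiTDT; split
  · positivity
  · rename_i h
    have h0 := cast_pos_of_ne b c h
    rw [div_le_iff₀ h0]
    nlinarith [mul_nonneg (Nat.cast_nonneg (α := ℝ) b) (Nat.cast_nonneg (α := ℝ) c)]

lemma step (b c b' c' : ℕ) (hs : b+c ≠ 0) (ht : b'+c' ≠ 0)
    (h : |((b:ℝ)-c)^2*((b':ℝ)+c') - ((b':ℝ)-c')^2*((b:ℝ)+c)| ≤ 6*(((b:ℝ)+c)*((b':ℝ)+c'))) :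
    |chiTDT b c - chiTDT b' c'| ≤ 6 := by
  have hS := cast_pos_of_ne b c hs
  have hT := cast_pos_of_ne b' c' ht
  unfold chiTDT
  rw [if_neg hs, if_neg ht, div_sub_div _ _ hS.ne' hT.ne', abs_div,
    abs_of_pos (mul_pos hS hT), div_le_iff₀ (mul_pos hS hT)]
  calc |((b:ℝ)-c)^2 * ((b':ℝ)+c') - ((b:ℝ)+c) * (((b':ℝ)-c')^2)|
      = |((b:ℝ)-c)^2*((b':ℝ)+c') - ((b':ℝ)-c')^2*((b:ℝ)+c)| := by ring_nf
    _ ≤ 6*(((b:ℝ)+c)*((b':ℝ)+c')) := h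
    _ = 6 * (((b:ℝ)+c)*((b':ℝ)+c')) := by ring

set_option maxHeartbeats 2000000 in
lemma branchA (b c p1 p2 q1 q2 : ℕ) (hp : p1 + p2 ≤ 2) (hq : q1 + q2 ≤ 2)
    (hpb : p1 ≤ b) (hpc : p2 ≤ c) (hb : b ≤ 1) (hc : c ≤ 1) :
    |chiTDT b c - chiTDT (b - p1 + q1) (c - p2 + q2)| ≤ 6 := by
  have hP1 : p1 ≤ 1 := by omega
  have hP2 : p2 ≤ 1 := by omega
  have hQ1 : q1 ≤ 2 := by omega
  have hQ2 : q2 ≤ 2 := by omega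
  interval_cases b <;> interval_cases c <;>
  interval_cases p1 <;> interval_cases p2 <;> interval_cases q1 <;> interval_cases q2 <;>
    first
    | (exfalso; omega)
    | (norm_num [chiTDT, abs_le])

set_option maxHeartbeats 4000000 in
lemma branchB (b c p1 p2 q1 q2 : ℕ) (hp : p1 + p2 ≤ 2) (hq : q1 + q2 ≤ 2)
    (hpb : p1 ≤ b) (hpc : p2 ≤ c) (hc : c ≤ 1) (h2 : c+8 ≤ 7*b) (h1 : b ≤ 7*c+8) :
    |chiTDT b c - chiTDT (b - p1 + q1) (c - p2 + q2)| ≤ 6 := by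
  have hP1 : p1 ≤ 2 := by omega
  have hP2 : p2 ≤ 1 := by omega
  have hQ1 : q1 ≤ 2 := by omega
  have hQ2 : q2 ≤ 2 := by omega
  have hb2 : 2 ≤ b := by omega
  have hbu : b ≤ 15 := by omega
  interval_cases c <;> interval_cases b <;>
  interval_cases p1 <;> interval_cases p2 <;> interval_cases q1 <;> interval_cases q2 <;>
    first
    | (exfalso; omega)
    | (norm_num [chiTDT, abs_le])

set_option maxHeartbeats 4000000 in
lemma branchC (b c p1 p2 q1 q2 : ℕ) (hp : p1 + p2 ≤ 2) (hq : q1 + q2 ≤ 2)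
    (hpb : p1 ≤ b) (hpc : p2 ≤ c) (hb : b ≤ 1) (h4 : b+8 ≤ 7*c) (h3 : c ≤ 7*b+8) :
    |chiTDT b c - chiTDT (b - p1 + q1) (c - p2 + q2)| ≤ 6 := by
  have hP1 : p1 ≤ 1 := by omega
  have hP2 : p2 ≤ 2 := by omega
  have hQ1 : q1 ≤ 2 := by omega
  have hQ2 : q2 ≤ 2 := by omega
  have hc2 : 2 ≤ c := by omega
  have hcu : c ≤ 15 := by omega
  interval_cases b <;> interval_cases c <;>
  interval_cases p1 <;> interval_cases p2 <;> interval_cases q1 <;> interval_cases q2 <;>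
    first
    | (exfalso; omega)
    | (norm_num [chiTDT, abs_le])

set_option maxHeartbeats 2000000 in
lemma branchD (b c p1 p2 q1 q2 : ℕ) (hp : p1 + p2 ≤ 2) (hq : q1 + q2 ≤ 2)
    (h4 : b+8 ≤ 7*c) (h2 : c+8 ≤ 7*b) :
    |chiTDT b c - chiTDT (b - p1 + q1) (c - p2 + q2)| ≤ 6 := by
  have hb2 : 2 ≤ b := by omega
  have hc2 : 2 ≤ c := by omega
  have hpb : p1 ≤ b := by omega
  have hpc : p2 ≤ c := by omega
  have hs : b + c ≠ 0 := by omega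
  have ht : (b - p1 + q1) + (c - p2 + q2) ≠ 0 := by omega
  apply step _ _ _ _ hs ht
  have e1 : ((b - p1 + q1 : ℕ):ℝ) = (b:ℝ) - (p1:ℝ) + (q1:ℝ) := by push_cast [hpb]; ring
  have e2 : ((c - p2 + q2 : ℕ):ℝ) = (c:ℝ) - (p2:ℝ) + (q2:ℝ) := by push_cast [hpc]; ring
  rw [e1, e2, abs_le]
  have h4r : (b:ℝ) + 8 ≤ 7*c := by exact_mod_cast h4
  have h2r : (c:ℝ) + 8 ≤ 7*b := by exact_mod_cast h2
  have hb2r : (2:ℝ) ≤ b := by exact_mod_cast hb2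
  have hc2r : (2:ℝ) ≤ c := by exact_mod_cast hc2
  clear h4 h2 hs ht e1 e2 hpb hpc hb2 hc2
  have hP1 : p1 ≤ 2 := by omega
  have hP2 : p2 ≤ 2 := by omega
  have hQ1 : q1 ≤ 2 := by omega
  have hQ2 : q2 ≤ 2 := by omega
  interval_cases p1 <;> interval_cases p2 <;> interval_cases q1 <;> interval_cases q2 <;>
    first
    | (exfalso; omega)
    | (push_cast
       refine ⟨by nlinarith [mul_nonneg (by linarith : (0:ℝ) ≤ 7*(c:ℝ) - b - 8) (by linarith : (0:ℝ) ≤ (b:ℝ)+c),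
          mul_nonneg (by linarith : (0:ℝ) ≤ 7*(b:ℝ) - c - 8) (by linarith : (0:ℝ) ≤ (b:ℝ)+c),
          sq_nonneg ((b:ℝ)-c), mul_nonneg (by linarith : (0:ℝ) ≤ (b:ℝ)) (by linarith : (0:ℝ) ≤ (c:ℝ))],
        by nlinarith [mul_nonneg (by linarith : (0:ℝ) ≤ 7*(c:ℝ) - b - 8) (by linarith : (0:ℝ) ≤ (b:ℝ)+c),
          mul_nonneg (by linarith : (0:ℝ) ≤ 7*(b:ℝ) - c - 8) (by linarith : (0:ℝ) ≤ (b:ℝ)+c),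
          sq_nonneg ((b:ℝ)-c), mul_nonneg (by linarith : (0:ℝ) ≤ (b:ℝ)) (by linarith : (0:ℝ) ≤ (c:ℝ))]⟩)

lemma upper (b c p1 p2 q1 q2 : ℕ) (hp : p1 + p2 ≤ 2) (hq : q1 + q2 ≤ 2)
    (hpb : p1 ≤ b) (hpc : p2 ≤ c)
    (h1 : b ≤ 7*c+8) (h3 : c ≤ 7*b+8) (h4 : c ≤ 1 ∨ b+8 ≤ 7*c) (h2 : b ≤ 1 ∨ c+8 ≤ 7*b) :
    |chiTDT b c - chiTDT (b - p1 + q1) (c - p2 + q2)| ≤ 6 := by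
  rcases h4 with h4 | h4 <;> rcases h2 with h2 | h2
  · exact branchA b c p1 p2 q1 q2 hp hq hpb hpc h2 h4
  · exact branchB b c p1 p2 q1 q2 hp hq hpb hpc h4 h2 h1
  · exact branchC b c p1 p2 q1 q2 hp hq hpb hpc h2 h4 h3
  · exact branchD b c p1 p2 q1 q2 hp hq h4 h2

lemma diff1 (b c : ℕ) (h2b : 2 ≤ b) :
    chiTDT b c - chiTDT (b-2) (c+2) = (8*((b:ℝ)-c) - 16)/((b:ℝ)+c) := by
  have hs : b + c ≠ 0 := by omega
  have ht : (b-2) + (c+2) ≠ 0 := by omega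
  have hS := cast_pos_of_ne b c hs
  unfold chiTDT
  rw [if_neg hs, if_neg ht]
  rw [show ((b-2:ℕ):ℝ) = (b:ℝ)-2 from by push_cast [h2b]; ring,
      show ((c+2:ℕ):ℝ) = (c:ℝ)+2 from by push_cast; ring]
  have hT : ((b:ℝ)-2) + ((c:ℝ)+2) ≠ 0 := by
    have h' : ((b:ℝ)-2) + ((c:ℝ)+2) = (b:ℝ)+c := by ring
    rw [h']; exact hS.ne'
  field_simp
  ring

lemma diff2 (b c : ℕ) (h2c : 2 ≤ c) :
    chiTDT b c - chiTDT (b+2) (c-2) = (-8*((b:ℝ)-c) - 16)/((b:ℝ)+c) := by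
  have hs : b + c ≠ 0 := by omega
  have ht : (b+2) + (c-2) ≠ 0 := by omega
  have hS := cast_pos_of_ne b c hs
  unfold chiTDT
  rw [if_neg hs, if_neg ht]
  rw [show ((c-2:ℕ):ℝ) = (c:ℝ)-2 from by push_cast [h2c]; ring,
      show ((b+2:ℕ):ℝ) = (b:ℝ)+2 from by push_cast; ring]
  have hT : ((b:ℝ)+2) + ((c:ℝ)-2) ≠ 0 := by
    have h' : ((b:ℝ)+2) + ((c:ℝ)-2) = (b:ℝ)+c := by ring
    rw [h']; exact hS.ne'
  field_simp
  ring

lemma neighbor_self (b c : ℕ) : tdtNeighbor b c b c :=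
  ⟨(0,0),(0,0), by norm_num, by norm_num, by omega, by omega, by omega, by omega⟩

lemma neighbor_sum_le (b c b' c' : ℕ) (h : tdtNeighbor b c b' c') : b' + c' ≤ b + c + 2 := by
  obtain ⟨p,q,hp,hq,hpb,hpc,rfl,rfl⟩ := h
  omega

lemma bdd (b c : ℕ) : BddAbove (Set.range (fun p : {p : ℕ × ℕ // tdtNeighbor b c p.1 p.2} =>
    |chiTDT b c - chiTDT (p : ℕ × ℕ).1 (p : ℕ × ℕ).2|)) := by
  refine ⟨2*((b:ℝ)+c)+2, ?_⟩
  rintro x ⟨⟨⟨b',c'⟩, hn⟩, rfl⟩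
  simp only
  have h1 : |chiTDT b c - chiTDT b' c'| ≤ |chiTDT b c| + |chiTDT b' c'| := abs_sub _ _
  rw [abs_of_nonneg (chiTDT_nonneg b c), abs_of_nonneg (chiTDT_nonneg b' c')] at h1
  have h2 := chiTDT_le b c
  have h3 := chiTDT_le b' c'
  have h4 : (b':ℝ) + c' ≤ (b:ℝ) + c + 2 := by
    have := neighbor_sum_le b c b' c' hn
    exact_mod_cast this
  linarith

/-- Lemma 2: the local sensitivity of the TDT statistic at `(b,c)` exceeds `6`
iff `0 ≤ c < (b−8)/7`, or `2 ≤ b < (c+8)/7`, or `0 ≤ b < (c−8)/7`, or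
`2 ≤ c < (b+8)/7`. -/
theorem stmt16 (b c : ℕ) :
    6 < (⨆ p : {p : ℕ × ℕ // tdtNeighbor b c p.1 p.2},
        |chiTDT b c - chiTDT (p : ℕ × ℕ).1 (p : ℕ × ℕ).2|) ↔
      ((0 : ℝ) ≤ (c : ℝ) ∧ (c : ℝ) < ((b : ℝ) - 8) / 7) ∨
      ((2 : ℝ) ≤ (b : ℝ) ∧ (b : ℝ) < ((c : ℝ) + 8) / 7) ∨
      ((0 : ℝ) ≤ (b : ℝ) ∧ (b : ℝ) < ((c : ℝ) - 8) / 7) ∨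
      ((2 : ℝ) ≤ (c : ℝ) ∧ (c : ℝ) < ((b : ℝ) + 8) / 7) := by
  haveI : Nonempty {p : ℕ × ℕ // tdtNeighbor b c p.1 p.2} := ⟨⟨(b,c), neighbor_self b c⟩⟩
  constructor
  · intro h
    by_contra hR
    push_neg at hR
    obtain ⟨hA, hB, hC, hD⟩ := hR
    have h1 : b ≤ 7*c+8 := by
      have hA' := hA (Nat.cast_nonneg c)
      have h' : (b:ℝ) ≤ 7*c+8 := by linarith
      exact_mod_cast h'
    have h3 : c ≤ 7*b+8 := by
      have hC' := hC (Nat.cast_nonneg b)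
      have h' : (c:ℝ) ≤ 7*b+8 := by linarith
      exact_mod_cast h'
    have h4 : c ≤ 1 ∨ b+8 ≤ 7*c := by
      by_cases hc1 : c ≤ 1
      · exact Or.inl hc1
      · right
        have h2c : (2:ℝ) ≤ c := by exact_mod_cast (by omega : 2 ≤ c)
        have hD' := hD h2c
        have h' : (b:ℝ)+8 ≤ 7*c := by linarith
        exact_mod_cast h'
    have h2 : b ≤ 1 ∨ c+8 ≤ 7*b := by
      by_cases hb1 : b ≤ 1
      · exact Or.inl hb1
      · right
        have h2b : (2:ℝ) ≤ b := by exact_mod_cast (by omega : 2 ≤ b)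
        have hB' := hB h2b
        have h' : (c:ℝ)+8 ≤ 7*b := by linarith
        exact_mod_cast h'
    have hle : (⨆ p : {p : ℕ × ℕ // tdtNeighbor b c p.1 p.2},
        |chiTDT b c - chiTDT (p : ℕ × ℕ).1 (p : ℕ × ℕ).2|) ≤ 6 := by
      apply ciSup_le
      rintro ⟨⟨b',c'⟩, hn⟩
      show |chiTDT b c - chiTDT b' c'| ≤ 6
      obtain ⟨p,q,hp,hq,hpb,hpc,hb',hc'⟩ := hn
      have hb2 : b' = b - p.1 + q.1 := hb'
      have hc2 : c' = c - p.2 + q.2 := hc'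
      rw [hb2, hc2]
      exact upper b c p.1 p.2 q.1 q.2 hp hq hpb hpc h1 h3 h4 h2
    linarith
  · intro h
    have hbdd := bdd b c
    rcases h with ⟨h0, hlt⟩ | ⟨h2b, hlt⟩ | ⟨h0, hlt⟩ | ⟨h2c, hlt⟩
    · have hb : 7*c+9 ≤ b := by
        have h' : 7*(c:ℝ)+8 < b := by linarith
        have h'' : 7*c+8 < b := by exact_mod_cast h'
        omega
      have h2b : 2 ≤ b := by omega
      have hn : tdtNeighbor b c (b-2) (c+2) :=
        ⟨(2,0),(0,2), by norm_num, by norm_num, by omega, by omega, by omega, by omega⟩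
      refine lt_of_lt_of_le ?_ (le_ciSup hbdd ⟨(b-2, c+2), hn⟩)
      show 6 < |chiTDT b c - chiTDT (b-2) (c+2)|
      refine lt_of_lt_of_le ?_ (le_abs_self _)
      rw [diff1 b c h2b, lt_div_iff₀ (cast_pos_of_ne b c (by omega))]
      have hbr : 7*(c:ℝ)+9 ≤ b := by exact_mod_cast hb
      linarith
    · have hb2 : 2 ≤ b := by exact_mod_cast h2b
      have hn : tdtNeighbor b c (b-2) (c+2) :=
        ⟨(2,0),(0,2), by norm_num, by norm_num, by omega, by omega, by omega, by omega⟩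
      refine lt_of_lt_of_le ?_ (le_ciSup hbdd ⟨(b-2, c+2), hn⟩)
      show 6 < |chiTDT b c - chiTDT (b-2) (c+2)|
      refine lt_of_lt_of_le ?_ (neg_le_abs _)
      rw [diff1 b c hb2, lt_neg, div_lt_iff₀ (cast_pos_of_ne b c (by omega))]
      have hltr : 7*(b:ℝ) < (c:ℝ) + 8 := by linarith
      linarith
    · have hc9 : 7*b+9 ≤ c := by
        have h' : 7*(b:ℝ)+8 < c := by linarith
        have h'' : 7*b+8 < c := by exact_mod_cast h'
        omega
      have h2c : 2 ≤ c := by omega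
      have hn : tdtNeighbor b c (b+2) (c-2) :=
        ⟨(0,2),(2,0), by norm_num, by norm_num, by omega, by omega, by omega, by omega⟩
      refine lt_of_lt_of_le ?_ (le_ciSup hbdd ⟨(b+2, c-2), hn⟩)
      show 6 < |chiTDT b c - chiTDT (b+2) (c-2)|
      refine lt_of_lt_of_le ?_ (le_abs_self _)
      rw [diff2 b c h2c, lt_div_iff₀ (cast_pos_of_ne b c (by omega))]
      have hcr : 7*(b:ℝ)+9 ≤ c := by exact_mod_cast hc9
      linarith
    · have hc2 : 2 ≤ c := by exact_mod_cast h2c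
      have hn : tdtNeighbor b c (b+2) (c-2) :=
        ⟨(0,2),(2,0), by norm_num, by norm_num, by omega, by omega, by omega, by omega⟩
      refine lt_of_lt_of_le ?_ (le_ciSup hbdd ⟨(b+2, c-2), hn⟩)
      show 6 < |chiTDT b c - chiTDT (b+2) (c-2)|
      refine lt_of_lt_of_le ?_ (neg_le_abs _)
      rw [diff2 b c hc2, lt_neg, div_lt_iff₀ (cast_pos_of_ne b c (by omega))]
      have hltr : 7*(c:ℝ) < (b:ℝ) + 8 := by linarith
      linarith
end
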